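/- arXiv:2106.08084 — 6 statements merged into one kernel-verified Lean document; each statement's English description precedes it below -/
import Mathlib

section
/- Let (P, dist) be a metric space in which every pair of points is joined by a constant-speed geodesic: for all a, b ∈ P there is γ : [0,1] → P with γ(0) = a, γ(1) = b and dist(γ(s), γ(s')) = |s−s'|·dist(a,b) for all s, s' ∈ [0,1]. Let C ≥ 0 and for each integer n ≥ 1 let f^n : [0,∞) → P satisfy f^n(t) = f^n(⌊nt⌋/n) for all t ≥ 0 (piecewise constancy) and dist(f^n(k/n), f^n((k+1)/n)) ≤ C/n for all k ∈ ℕ (almost-equicontinuity). Assume that for every t ≥ 0 the set {f^n(t) : n ≥ 1} has compact closure in P. Then there exist a strictly increasing sequence (n_l)_l of indices and a continuous curve f : [0,∞) → P such that for every T > 0, sup_{t ∈ [0,T]} dist(f^{n_l}(t), f(t)) → 0 as l → ∞. -/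
open Set Filter Topology

private theorem stmt2_tele {P : Type*} [MetricSpace P] {C : ℝ} {f : ℕ → ℝ → P}
    (heq : ∀ n, 1 ≤ n → ∀ k : ℕ,
      dist (f n ((k : ℝ) / n)) (f n (((k : ℝ) + 1) / n)) ≤ C / n)
    {n : ℕ} (hn : 1 ≤ n) (j : ℕ) : ∀ k, j ≤ k →
    dist (f n ((j : ℝ) / n)) (f n ((k : ℝ) / n)) ≤ ((k : ℝ) - j) * (C / n) := by
  intro k hk
  induction k, hk using Nat.le_induction with
  | base => simp
  | succ k hk ih =>
    have h2 := heq n hn k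
    calc dist (f n ((j : ℝ) / n)) (f n (((k + 1 : ℕ) : ℝ) / n))
        ≤ dist (f n ((j : ℝ) / n)) (f n ((k : ℝ) / n)) +
          dist (f n ((k : ℝ) / n)) (f n (((k + 1 : ℕ) : ℝ) / n)) := dist_triangle _ _ _
      _ ≤ ((k : ℝ) - j) * (C / n) + C / n := by
          push_cast
          exact add_le_add ih h2
      _ = (((k + 1 : ℕ) : ℝ) - j) * (C / n) := by push_cast; ring

private theorem stmt2_close {P : Type*} [MetricSpace P] {C : ℝ} (hC : 0 ≤ C) {f : ℕ → ℝ → P}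
    (hpc : ∀ n, 1 ≤ n → ∀ t : ℝ, 0 ≤ t → f n t = f n (⌊(n : ℝ) * t⌋₊ / n))
    (heq : ∀ n, 1 ≤ n → ∀ k : ℕ,
      dist (f n ((k : ℝ) / n)) (f n (((k : ℝ) + 1) / n)) ≤ C / n)
    {n : ℕ} (hn : 1 ≤ n) : ∀ s t : ℝ, 0 ≤ s → 0 ≤ t → s ≤ t →
    dist (f n s) (f n t) ≤ C * |s - t| + C / n := by
  intro s t hs ht hst
  have hn0 : (0 : ℝ) < n := by exact_mod_cast hn
  rw [hpc n hn s hs, hpc n hn t ht]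
  set j := ⌊(n : ℝ) * s⌋₊ with hj
  set k := ⌊(n : ℝ) * t⌋₊ with hk
  have hjk : j ≤ k := Nat.floor_le_floor (by nlinarith)
  have h1 : dist (f n ((j : ℝ) / n)) (f n ((k : ℝ) / n)) ≤ ((k : ℝ) - j) * (C / n) :=
    stmt2_tele heq hn j k hjk
  have hkle : (k : ℝ) ≤ n * t := Nat.floor_le (by positivity)
  have hjge : (n : ℝ) * s < j + 1 := Nat.lt_floor_add_one _
  have habs : |s - t| = t - s := by rw [abs_sub_comm]; exact abs_of_nonneg (by linarith)
  have h2 : ((k : ℝ) - j) * (C / n) ≤ ((n : ℝ) * (t - s) + 1) * (C / n) := by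
    have hCn : 0 ≤ C / (n : ℝ) := by positivity
    apply mul_le_mul_of_nonneg_right _ hCn
    linarith
  have h3 : ((n : ℝ) * (t - s) + 1) * (C / n) = C * (t - s) + C / n := by
    field_simp
  rw [habs]
  calc dist (f n ((j : ℝ) / n)) (f n ((k : ℝ) / n)) ≤ ((k : ℝ) - j) * (C / n) := h1
    _ ≤ ((n : ℝ) * (t - s) + 1) * (C / n) := h2
    _ = C * (t - s) + C / n := h3

private theorem stmt2_close' {P : Type*} [MetricSpace P] {C : ℝ} (hC : 0 ≤ C) {f : ℕ → ℝ → P}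
    (hpc : ∀ n, 1 ≤ n → ∀ t : ℝ, 0 ≤ t → f n t = f n (⌊(n : ℝ) * t⌋₊ / n))
    (heq : ∀ n, 1 ≤ n → ∀ k : ℕ,
      dist (f n ((k : ℝ) / n)) (f n (((k : ℝ) + 1) / n)) ≤ C / n)
    {n : ℕ} (hn : 1 ≤ n) (s t : ℝ) (hs : 0 ≤ s) (ht : 0 ≤ t) :
    dist (f n s) (f n t) ≤ C * |s - t| + C / n := by
  rcases le_total s t with h | h
  · exact stmt2_close hC hpc heq hn s t hs ht h
  · rw [dist_comm, abs_sub_comm]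
    exact stmt2_close hC hpc heq hn t s ht hs h

/-- Ascoli–Arzelà argument for piecewise constant trajectories in a geodesic
metric space.  If each pair of points of `P` is joined by a constant-speed geodesic, the
curves `f^n` are piecewise constant on intervals `[k/n, (k+1)/n)` with jumps at most `C/n`,
and the sets `{f^n(t)}_n` are pointwise precompact, then a subsequence converges locally
uniformly to a continuous limit curve. -/
theorem stmt2 {P : Type*} [MetricSpace P]
    (hgeo : ∀ a b : P, ∃ γ : ℝ → P, γ 0 = a ∧ γ 1 = b ∧
      ∀ s ∈ Icc (0:ℝ) 1, ∀ s' ∈ Icc (0:ℝ) 1, dist (γ s) (γ s') = |s - s'| * dist a b)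
    (C : ℝ) (hC : 0 ≤ C) (f : ℕ → ℝ → P)
    (hpc : ∀ n, 1 ≤ n → ∀ t : ℝ, 0 ≤ t → f n t = f n (⌊(n : ℝ) * t⌋₊ / n))
    (heq : ∀ n, 1 ≤ n → ∀ k : ℕ,
      dist (f n ((k : ℝ) / n)) (f n (((k : ℝ) + 1) / n)) ≤ C / n)
    (hcpt : ∀ t : ℝ, 0 ≤ t → IsCompact (closure {p | ∃ n, 1 ≤ n ∧ p = f n t})) :
    ∃ φ : ℕ → ℕ, StrictMono φ ∧ (∀ l, 1 ≤ φ l) ∧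
      ∃ g : ℝ → P, ContinuousOn g (Ici 0) ∧
        ∀ T : ℝ, 0 < T →
          TendstoUniformlyOn (fun l t => f (φ l) t) g atTop (Icc 0 T) := by
  classical
  obtain ⟨U, hU⟩ : ∃ U : Ultrafilter ℕ, (U : Filter ℕ) ≤ atTop :=
    ⟨Ultrafilter.of atTop, Ultrafilter.of_le _⟩
  have hmem1 : ∀ᶠ n in (U : Filter ℕ), 1 ≤ n := hU (eventually_ge_atTop 1)
  -- define the limit curve via compactness and the ultrafilter
  have hlim : ∀ t : ℝ, 0 ≤ t → ∃ p, Tendsto (fun n => f n t) (U : Filter ℕ) (𝓝 p) := by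
    intro t ht
    have hK : closure {p | ∃ n, 1 ≤ n ∧ p = f n t} ∈ U.map (fun n => f n t) := by
      rw [Ultrafilter.mem_map]
      filter_upwards [hmem1] with n hn
      exact subset_closure ⟨n, hn, rfl⟩
    obtain ⟨p, -, hp⟩ := (hcpt t ht).ultrafilter_le_nhds (U.map _) (le_principal_iff.2 hK)
    exact ⟨p, hp⟩
  have hP : Nonempty P := ⟨f 1 0⟩
  choose! g hg using hlim
  -- the limit curve is Lipschitz on [0, ∞)
  have hLip : ∀ s, 0 ≤ s → ∀ t, 0 ≤ t → dist (g s) (g t) ≤ C * |s - t| := by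
    intro s hs t ht
    have h1 : Tendsto (fun n => dist (f n s) (f n t)) (U : Filter ℕ)
        (𝓝 (dist (g s) (g t))) := (hg s hs).dist (hg t ht)
    have h2 : Tendsto (fun n : ℕ => C * |s - t| + C / n) (U : Filter ℕ) (𝓝 (C * |s - t|)) := by
      have h3 : Tendsto (fun n : ℕ => C * |s - t| + C / n) atTop (𝓝 (C * |s - t| + 0)) :=
        tendsto_const_nhds.add (tendsto_const_nhds.div_atTop tendsto_natCast_atTop_atTop)
      simpa using h3.mono_left hU
    refine le_of_tendsto_of_tendsto h1 h2 ?_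
    filter_upwards [hmem1] with n hn
    exact stmt2_close' hC hpc heq hn s t hs ht
  have hcont : ContinuousOn g (Ici 0) := by
    have hl : LipschitzOnWith (Real.toNNReal C) g (Ici 0) := by
      apply LipschitzOnWith.of_dist_le_mul
      intro x hx y hy
      calc dist (g x) (g y) ≤ C * |x - y| := hLip x hx y hy
        _ ≤ Real.toNNReal C * dist x y := by
            rw [Real.dist_eq]
            exact mul_le_mul (Real.le_coe_toNNReal C) le_rfl (abs_nonneg _)
              (Real.toNNReal C).coe_nonneg
    exact hl.continuousOn
  -- enumerate the nonnegative rationals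
  let e : ℕ ≃ ℚ := (Denumerable.eqv ℚ).symm
  let r : ℕ → ℝ := fun i => max ((e i : ℚ) : ℝ) 0
  have hr : ∀ i, 0 ≤ r i := fun i => le_max_right _ _
  -- the good sets belong to the ultrafilter
  have hA : ∀ m : ℕ, ∀ᶠ n in (U : Filter ℕ),
      1 ≤ n ∧ ∀ i ≤ m, dist (f n (r i)) (g (r i)) < 1 / ((m : ℝ) + 1) := by
    intro m
    have h1 : ∀ i ∈ Iic m, ∀ᶠ n in (U : Filter ℕ),
        dist (f n (r i)) (g (r i)) < 1 / ((m : ℝ) + 1) := by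
      intro i _
      exact Metric.tendsto_nhds.mp (hg (r i) (hr i)) (1 / ((m : ℝ) + 1)) (by positivity)
    have h2 := (eventually_all_finite (Set.finite_Iic m)).2 h1
    filter_upwards [hmem1, h2] with n hn1 hn2
    exact ⟨hn1, fun i hi => hn2 i hi⟩
  have hfreq : ∀ m : ℕ, ∃ᶠ n in atTop,
      1 ≤ n ∧ ∀ i ≤ m, dist (f n (r i)) (g (r i)) < 1 / ((m : ℝ) + 1) := by
    intro m
    rw [Nat.frequently_atTop_iff_infinite]
    intro hfin
    have hc : {n : ℕ | 1 ≤ n ∧ ∀ i ≤ m, dist (f n (r i)) (g (r i)) < 1 / ((m : ℝ) + 1)}ᶜ ∈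
        (U : Filter ℕ) := hU (Nat.cofinite_eq_atTop ▸ hfin.compl_mem_cofinite)
    have h2 := inter_mem (hA m) hc
    rw [Set.inter_compl_self] at h2
    exact Filter.empty_notMem _ h2
  obtain ⟨φ, hφmono, hφ⟩ := extraction_forall_of_frequently hfreq
  refine ⟨φ, hφmono, fun l => (hφ l).1, g, hcont, ?_⟩
  intro T hT
  rw [Metric.tendstoUniformlyOn_iff]
  intro ε hε
  -- choose a rational mesh size
  obtain ⟨q0, hq0pos, hq0⟩ : ∃ q : ℚ, 0 < q ∧ (C + 1) * q < ε / 4 := by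
    obtain ⟨q, hq1, hq2⟩ := exists_rat_btwn (show (0 : ℝ) < ε / 4 / (C + 1) by positivity)
    refine ⟨q, by exact_mod_cast hq1, ?_⟩
    calc (C + 1) * (q : ℝ) < (C + 1) * (ε / 4 / (C + 1)) := by
          apply mul_lt_mul_of_pos_left hq2 (by linarith)
      _ = ε / 4 := by field_simp
  have hq0pos' : (0 : ℝ) < (q0 : ℝ) := by exact_mod_cast hq0pos
  set J := ⌈T / (q0 : ℝ)⌉₊ with hJ
  set M := (Finset.range (J + 1)).sup (fun j => e.symm ((j : ℚ) * q0)) with hM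
  have hev1 : ∀ᶠ l : ℕ in atTop, C / (φ l : ℝ) < ε / 4 := by
    have ht1 : Tendsto (fun l : ℕ => C / (φ l : ℝ)) atTop (𝓝 0) :=
      tendsto_const_nhds.div_atTop (tendsto_natCast_atTop_atTop.comp hφmono.tendsto_atTop)
    exact ht1.eventually_lt_const (by positivity)
  have hev2 : ∀ᶠ l : ℕ in atTop, 1 / ((l : ℝ) + 1) < ε / 4 := by
    exact tendsto_one_div_add_atTop_nhds_zero_nat.eventually_lt_const (by positivity)
  filter_upwards [eventually_ge_atTop M, hev1, hev2] with l hlM hl1 hl2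
  rintro t ⟨ht0, htT⟩
  set j := ⌊t / (q0 : ℝ)⌋₊ with hjdef
  set s := (j : ℝ) * (q0 : ℝ) with hsdef
  have hs0 : 0 ≤ s := by positivity
  have hjle : (j : ℝ) ≤ t / (q0 : ℝ) := Nat.floor_le (by positivity)
  have hst : s ≤ t := by
    rw [hsdef]
    calc (j : ℝ) * (q0 : ℝ) ≤ (t / (q0 : ℝ)) * (q0 : ℝ) := by
          apply mul_le_mul_of_nonneg_right hjle hq0pos'.le
      _ = t := by field_simp
  have hts : t - s < (q0 : ℝ) := by
    have h4 : t / (q0 : ℝ) < (j : ℝ) + 1 := Nat.lt_floor_add_one _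
    have h5 : t < ((j : ℝ) + 1) * (q0 : ℝ) := by
      calc t = (t / (q0 : ℝ)) * (q0 : ℝ) := by field_simp
        _ < ((j : ℝ) + 1) * (q0 : ℝ) := by apply mul_lt_mul_of_pos_right h4 hq0pos'
    rw [hsdef]; nlinarith
  have hjJ : j < J + 1 := by
    have h6 : j ≤ J := by
      calc j = ⌊t / (q0 : ℝ)⌋₊ := rfl
        _ ≤ ⌊T / (q0 : ℝ)⌋₊ := Nat.floor_le_floor (by gcongr)
        _ ≤ J := Nat.floor_le_ceil _
    omega
  set i := e.symm ((j : ℚ) * q0) with hi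
  have hiM : i ≤ M := Finset.le_sup (f := fun j : ℕ => e.symm ((j : ℚ) * q0)) (Finset.mem_range.2 hjJ)
  have hri : r i = s := by
    have h7 : e i = (j : ℚ) * q0 := e.apply_symm_apply _
    have h8 : ((e i : ℚ) : ℝ) = s := by rw [h7]; push_cast [hsdef]; ring
    simp only [r, h8, max_eq_left hs0]
  have hdist_s : dist (f (φ l) s) (g s) < 1 / ((l : ℝ) + 1) := by
    rw [← hri]
    exact (hφ l).2 i (le_trans hiM hlM)
  have hb1 : dist (g t) (g s) < ε / 4 := by
    calc dist (g t) (g s) ≤ C * |t - s| := hLip t ht0 s hs0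
      _ ≤ C * (q0 : ℝ) := by
          apply mul_le_mul_of_nonneg_left _ hC
          rw [abs_of_nonneg (by linarith)]
          linarith
      _ ≤ (C + 1) * (q0 : ℝ) := by nlinarith
      _ < ε / 4 := by exact_mod_cast hq0
  have hb2 : dist (g s) (f (φ l) s) < ε / 4 := by
    rw [dist_comm]; exact lt_trans hdist_s hl2
  have hb3 : dist (f (φ l) s) (f (φ l) t) < ε / 4 + ε / 4 := by
    have h9 := stmt2_close' hC hpc heq (hφ l).1 s t hs0 ht0
    have h10 : C * |s - t| ≤ (C + 1) * (q0 : ℝ) := by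
      rw [abs_sub_comm, abs_of_nonneg (by linarith)]
      nlinarith
    have h11 : (C + 1) * ((q0 : ℝ)) < ε / 4 := by exact_mod_cast hq0
    linarith
  have tri : dist (g t) (f (φ l) t) ≤
      dist (g t) (g s) + dist (g s) (f (φ l) s) + dist (f (φ l) s) (f (φ l) t) :=
    dist_triangle4 _ _ _ _
  linarith
end

section
/- Let Z and Y be compact metric spaces. Let g^n, g : Z×Y → ℝ be continuous with g^n → g uniformly, and let η^n ≥ 0 be reals with η^n → η ∈ [0,∞). Let σ^n, σ be Borel probability measures on Z with σ^n → σ weakly*, let ρ^n, ρ be Borel probability measures on Y with ρ^n → ρ weakly*, and let λ^n ∈ Π(σ^n, ρ^n) be Borel probability measures on Z×Y with λ^n → λ weakly*. Then λ ∈ Π(σ, ρ) and ∫_{Z×Y} g dλ + η·KL(λ | σ⊗ρ) ≤ liminf_{n→∞} [ ∫_{Z×Y} g^n dλ^n + η^n·KL(λ^n | σ^n⊗ρ^n) ], with the convention 0·(+∞) = 0. -/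
open MeasureTheory Set Filter
open scoped ENNReal Classical

noncomputable section

/-- Kullback–Leibler divergence via `φ(s) = s log s − s + 1`. -/
def KLphi (s : ℝ) : ℝ := s * Real.log s - s + 1

noncomputable def KL {A : Type*} [MeasurableSpace A] (α β : Measure A) : ℝ≥0∞ :=
  if α ≪ β then ∫⁻ x, ENNReal.ofReal (KLphi ((α.rnDeriv β x).toReal)) ∂β else ⊤

/-- Product of two measures. -/
noncomputable def prodM {A B : Type*} [MeasurableSpace A] [MeasurableSpace B]
    (α : Measure A) (β : Measure B) : Measure (A × B) :=
  α.bind fun a => β.map (Prod.mk a)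

/-- Weak* convergence of measures: convergence of integrals of all continuous functions. -/
def WkTendsto {A : Type*} [MeasurableSpace A] [TopologicalSpace A]
    (μs : ℕ → Measure A) (μ : Measure A) : Prop :=
  ∀ g : A → ℝ, Continuous g →
    Tendsto (fun n => ∫ x, g x ∂μs n) atTop (nhds (∫ x, g x ∂μ))

/-!
The marginal constraints pass to the limit because push-forwards under continuous maps preserve
weak* convergence and weak* limits are unique. For the entropy term use the dual representation
`KL(μ|ν) = sup_f (∫ f dμ - ∫ (exp f - 1) dν)` over continuous `f`. `KL ≥ sup` is the pointwise
Fenchel–Young inequality `s t ≤ φ(s) + exp t - 1` at `s = dμ/dν`. For `KL ≤ sup`: if `μ ≪ ν`,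
truncate `log (dμ/dν)` and apply Fatou; otherwise take a large multiple of the indicator of a
`ν`-null set charged by `μ`; in both cases replace the bounded potential by a continuous one close
in `L¹(μ + ν)`. Since `λⁿ` and `σⁿ ⊗ ρⁿ` converge weakly*, each dual functional converges along the
sequence, so `KL` is lower semicontinuous; with `∫ gⁿ dλⁿ → ∫ g dλ` (uniform convergence) and
`ηⁿ → η` this gives the liminf inequality.
-/
open InformationTheory Topology TopologicalSpace

lemma prodM_eq_prod {A B : Type*} [MeasurableSpace A] [MeasurableSpace B]
    (α : Measure A) (β : Measure B) : prodM α β = α.prod β :=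
  (Measure.prod_def α β).symm

section RealInequalities

lemma mul_sub_exp_sub_one_le_KLphi {s : ℝ} (hs : 0 ≤ s) (t : ℝ) :
    s * t - (Real.exp t - 1) ≤ KLphi s := by
  rcases hs.eq_or_lt with rfl | hs
  · simp [KLphi, (Real.exp_pos t).le]
  have : s * (t - Real.log s + 1) ≤ Real.exp t :=
    calc s * (t - Real.log s + 1) ≤ s * Real.exp (t - Real.log s) := by
          gcongr; linarith [Real.add_one_le_exp (t - Real.log s)]
      _ = Real.exp t := by rw [Real.exp_sub, Real.exp_log hs]; field_simp
  rw [KLphi]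
  linarith

lemma abs_exp_sub_exp_le {a c b : ℝ} (ha : a ≤ b) (hc : c ≤ b) :
    |Real.exp a - Real.exp c| ≤ Real.exp b * |a - c| := by
  wlog hca : c ≤ a generalizing a c
  · rw [abs_sub_comm, abs_sub_comm a]
    exact this hc ha (le_of_not_ge hca)
  rw [abs_of_nonneg (sub_nonneg.2 (Real.exp_le_exp.2 hca)), abs_of_nonneg (sub_nonneg.2 hca)]
  calc Real.exp a - Real.exp c = Real.exp a * (1 - Real.exp (c - a)) := by
        rw [Real.exp_sub]; field_simp
    _ ≤ Real.exp a * (a - c) :=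
        mul_le_mul_of_nonneg_left (by linarith [Real.add_one_le_exp (c - a)]) (Real.exp_pos a).le
    _ ≤ Real.exp b * (a - c) := mul_le_mul_of_nonneg_right (Real.exp_le_exp.2 ha) (sub_nonneg.2 hca)

/-- `r log R - R + 1 = (r - R) log R + klFun R`, and both terms are nonnegative. -/
lemma mul_log_sub_add_one_nonneg {r R : ℝ} (hR : 0 < R)
    (hbetween : (1 ≤ R ∧ R ≤ r) ∨ (r ≤ R ∧ R ≤ 1)) :
    0 ≤ r * Real.log R - R + 1 := by
  have hsign : 0 ≤ (r - R) * Real.log R := by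
    rcases hbetween with ⟨h1, h2⟩ | ⟨h1, h2⟩
    · exact mul_nonneg (by linarith) (Real.log_nonneg h1)
    · exact mul_nonneg_of_nonpos_of_nonpos (by linarith) (Real.log_nonpos hR.le h2)
  have := klFun_nonneg hR.le
  rw [klFun_apply] at this
  linarith

lemma mul_log_clamp_sub_add_one_nonneg {r A : ℝ} (hA : 1 ≤ A) :
    0 ≤ r * Real.log (max A⁻¹ (min r A)) - max A⁻¹ (min r A) + 1 := by
  have hA' : A⁻¹ ≤ 1 := inv_le_one_of_one_le₀ hA
  refine mul_log_sub_add_one_nonneg (lt_max_of_lt_left (by positivity)) ?_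
  rcases le_total 1 r with hr | hr
  · exact Or.inl ⟨le_max_of_le_right (le_min hr hA), max_le (hA'.trans hr) (min_le_left _ _)⟩
  · rw [min_eq_left (hr.trans hA)]
    exact Or.inr ⟨le_max_right _ _, max_le hA' hr⟩

lemma abs_log_clamp_le {r A : ℝ} (hA : 1 ≤ A) : |Real.log (max A⁻¹ (min r A))| ≤ Real.log A := by
  have hA0 : 0 < A := zero_lt_one.trans_le hA
  refine abs_le.2 ⟨?_, Real.log_le_log (lt_max_of_lt_left (by positivity))
    (max_le ((inv_le_one_of_one_le₀ hA).trans hA) (min_le_right _ _))⟩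
  rw [← Real.log_inv]
  exact Real.log_le_log (by positivity) (le_max_left _ _)

lemma tendsto_clamp_inv_nat {r : ℝ} (hr : 0 ≤ r) :
    Tendsto (fun k : ℕ => max ((k : ℝ) + 1)⁻¹ (min r ((k : ℝ) + 1))) atTop (𝓝 r) := by
  have hinv : Tendsto (fun k : ℕ => ((k : ℝ) + 1)⁻¹) atTop (𝓝 0) := by
    simpa only [one_div] using tendsto_one_div_add_atTop_nhds_zero_nat (𝕜 := ℝ)
  have hmin : Tendsto (fun k : ℕ => min r ((k : ℝ) + 1)) atTop (𝓝 r) := by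
    refine tendsto_const_nhds.congr' ?_
    obtain ⟨N, hN⟩ := exists_nat_ge r
    filter_upwards [eventually_ge_atTop N] with k hk
    exact (min_eq_left (by linarith [(Nat.cast_le (α := ℝ)).2 hk])).symm
  simpa only [max_eq_right hr] using hinv.max hmin

lemma tendsto_mul_log_clamp_inv_nat {r : ℝ} (hr : 0 ≤ r) :
    Tendsto (fun k : ℕ => r * Real.log (max ((k : ℝ) + 1)⁻¹ (min r ((k : ℝ) + 1)))
      - max ((k : ℝ) + 1)⁻¹ (min r ((k : ℝ) + 1)) + 1) atTop (𝓝 (KLphi r)) := by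
  rcases hr.eq_or_lt with rfl | hr'
  · simpa [KLphi] using ((tendsto_clamp_inv_nat le_rfl).neg.add_const 1)
  exact (((tendsto_clamp_inv_nat hr).log hr'.ne').const_mul r |>.sub
    (tendsto_clamp_inv_nat hr)).add_const 1

end RealInequalities

section Integrals

variable {X : Type*} [MeasurableSpace X] {μ ν : Measure X} {f g : X → ℝ} {b : ℝ}

lemma integrable_of_abs_le [IsFiniteMeasure μ] (hf : Measurable f) (hb : ∀ x, |f x| ≤ b) :
    Integrable f μ :=
  .of_bound hf.aestronglyMeasurable b (.of_forall hb)

lemma integrable_exp_of_abs_le [IsFiniteMeasure μ] (hf : Measurable f) (hb : ∀ x, |f x| ≤ b) :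
    Integrable (fun x => Real.exp (f x)) μ :=
  integrable_of_abs_le hf.exp fun x => by
    rw [abs_of_pos (Real.exp_pos _)]
    exact Real.exp_le_exp.2 (le_of_abs_le (hb x))

lemma ofReal_integral_le_lintegral_ofReal (f : X → ℝ) :
    ENNReal.ofReal (∫ x, f x ∂μ) ≤ ∫⁻ x, ENNReal.ofReal (f x) ∂μ := by
  by_cases hf : Integrable f μ
  · calc ENNReal.ofReal (∫ x, f x ∂μ) ≤ ENNReal.ofReal (∫ x, max (f x) 0 ∂μ) :=
          ENNReal.ofReal_le_ofReal (integral_mono hf hf.pos_part fun x => le_max_left _ _)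
      _ = ∫⁻ x, ENNReal.ofReal (max (f x) 0) ∂μ :=
          ofReal_integral_eq_lintegral_ofReal hf.pos_part (.of_forall fun x => le_max_right _ _)
      _ = ∫⁻ x, ENNReal.ofReal (f x) ∂μ := by simp [ENNReal.ofReal_max]
  · simp [integral_undef hf]

/-- The functional whose supremum over continuous `f` is `KL μ ν` (`t ↦ exp t - 1` is the convex
conjugate of `KLphi`). -/
def klDual (μ ν : Measure X) (f : X → ℝ) : ℝ :=
  ∫ x, f x ∂μ - ∫ x, (Real.exp (f x) - 1) ∂ν

lemma integrable_rnDeriv_mul_sub_exp [IsFiniteMeasure μ] [IsFiniteMeasure ν] (hf : Measurable f)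
    (hb : ∀ x, |f x| ≤ b) :
    Integrable (fun x => (μ.rnDeriv ν x).toReal * f x - (Real.exp (f x) - 1)) ν :=
  (Measure.integrable_toReal_rnDeriv.mul_bdd hf.aestronglyMeasurable (.of_forall hb)).sub
    ((integrable_exp_of_abs_le hf hb).sub (integrable_const 1))

lemma klDual_eq_integral_rnDeriv [IsFiniteMeasure μ] [IsFiniteMeasure ν] (hac : μ ≪ ν)
    (hf : Measurable f) (hb : ∀ x, |f x| ≤ b) :
    klDual μ ν f = ∫ x, ((μ.rnDeriv ν x).toReal * f x - (Real.exp (f x) - 1)) ∂ν := by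
  rw [klDual, ← integral_rnDeriv_smul hac]
  exact (integral_sub
    (Measure.integrable_toReal_rnDeriv.mul_bdd hf.aestronglyMeasurable (.of_forall hb))
    ((integrable_exp_of_abs_le hf hb).sub (integrable_const 1))).symm

lemma klDual_le_KL [IsFiniteMeasure μ] [IsFiniteMeasure ν] (hf : Measurable f)
    (hb : ∀ x, |f x| ≤ b) : (klDual μ ν f : EReal) ≤ KL μ ν := by
  by_cases hac : μ ≪ ν
  swap
  · simp [KL, hac]
  calc (klDual μ ν f : EReal) ≤ (ENNReal.ofReal (klDual μ ν f) : EReal) := by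
        rw [EReal.coe_ennreal_ofReal]
        exact EReal.coe_le_coe_iff.2 (le_max_left _ _)
    _ ≤ KL μ ν := by
        rw [EReal.coe_ennreal_le_coe_ennreal_iff, klDual_eq_integral_rnDeriv hac hf hb, KL,
          if_pos hac]
        exact (ofReal_integral_le_lintegral_ofReal _).trans (lintegral_mono fun x =>
          ENNReal.ofReal_le_ofReal (mul_sub_exp_sub_one_le_KLphi ENNReal.toReal_nonneg _))

lemma exists_klDual_gt_of_not_ac (hac : ¬ μ ≪ ν) [IsFiniteMeasure μ] (c : ℝ) :
    ∃ f : X → ℝ, Measurable f ∧ (∃ b, ∀ x, |f x| ≤ b) ∧ c < klDual μ ν f := by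
  obtain ⟨s, hs, hνs, hμs⟩ : ∃ s, MeasurableSet s ∧ ν s = 0 ∧ μ s ≠ 0 := by
    by_contra! h
    exact hac (Measure.AbsolutelyContinuous.mk h)
  have hμs' : 0 < μ.real s := ENNReal.toReal_pos hμs (measure_ne_top μ s)
  set T := (c + 1) / μ.real s with hT
  refine ⟨s.indicator fun _ => T, measurable_const.indicator hs, ⟨|T|, fun x => ?_⟩, ?_⟩
  · by_cases hx : x ∈ s <;> simp [hx]
  have hν : ∫ x, (Real.exp (s.indicator (fun _ => T) x) - 1) ∂ν = 0 :=
    integral_eq_zero_of_ae <| by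
      filter_upwards [measure_eq_zero_iff_ae_notMem.1 hνs] with x hx
      simp [hx]
  rw [klDual, hν, integral_indicator_const _ hs, smul_eq_mul, sub_zero, hT,
    mul_div_cancel₀ _ hμs'.ne']
  linarith

lemma exists_klDual_gt_of_ac [IsFiniteMeasure μ] [IsFiniteMeasure ν] (hac : μ ≪ ν) {c : ℝ}
    (hc : ENNReal.ofReal c < KL μ ν) :
    ∃ f : X → ℝ, Measurable f ∧ (∃ b, ∀ x, |f x| ≤ b) ∧ c < klDual μ ν f := by
  set r : X → ℝ := fun x => (μ.rnDeriv ν x).toReal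
  -- `R k` truncates `dμ/dν` to `[1/(k+1), k+1]`; by Fatou the bounded potentials `log ∘ R k`
  -- have dual values with `liminf` at least `KL μ ν`.
  set R : ℕ → X → ℝ := fun k x => max ((k : ℝ) + 1)⁻¹ (min (r x) ((k : ℝ) + 1))
  have hr : Measurable r := (Measure.measurable_rnDeriv μ ν).ennreal_toReal
  have hR : ∀ k, Measurable (R k) := fun k => measurable_const.max (hr.min measurable_const)
  have hRpos : ∀ k x, 0 < R k x := fun k x => lt_max_of_lt_left (by positivity)
  have hk1 : ∀ k : ℕ, (1 : ℝ) ≤ (k : ℝ) + 1 := fun k => by simp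
  have hlogR : ∀ k x, |Real.log (R k x)| ≤ Real.log ((k : ℝ) + 1) :=
    fun k x => abs_log_clamp_le (hk1 k)
  have hfatou : KL μ ν ≤ liminf (fun k => ∫⁻ x, ENNReal.ofReal
      (r x * Real.log (R k x) - R k x + 1) ∂ν) atTop := by
    calc KL μ ν = ∫⁻ x, liminf (fun k => ENNReal.ofReal
          (r x * Real.log (R k x) - R k x + 1)) atTop ∂ν := by
          rw [KL, if_pos hac]
          refine lintegral_congr fun x => ?_
          exact ((ENNReal.continuous_ofReal.tendsto _).comp
            (tendsto_mul_log_clamp_inv_nat ENNReal.toReal_nonneg)).liminf_eq.symm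
      _ ≤ _ := lintegral_liminf_le fun k =>
          ((hr.mul (hR k).log).sub (hR k)).add_const 1 |>.ennreal_ofReal
  obtain ⟨k, hk⟩ := (eventually_lt_of_lt_liminf (hc.trans_le hfatou)).exists
  have hfm : Measurable fun x => Real.log (R k x) := (hR k).log
  refine ⟨fun x => Real.log (R k x), hfm, ⟨_, hlogR k⟩, ?_⟩
  have hintegrand : ∀ x, (μ.rnDeriv ν x).toReal * Real.log (R k x)
      - (Real.exp (Real.log (R k x)) - 1)
      = r x * Real.log (R k x) - R k x + 1 := fun x => by
    rw [Real.exp_log (hRpos k x)]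
    ring
  have hint := integrable_rnDeriv_mul_sub_exp (μ := μ) (ν := ν) hfm (hlogR k)
  rw [klDual_eq_integral_rnDeriv hac hfm (hlogR k)]
  simp only [hintegrand] at hint ⊢
  rw [← ofReal_integral_eq_lintegral_ofReal hint
    (.of_forall fun x => mul_log_clamp_sub_add_one_nonneg (hk1 k))] at hk
  exact (ENNReal.ofReal_lt_ofReal_iff'.1 hk).1

lemma abs_klDual_sub_klDual_le [IsFiniteMeasure μ] [IsFiniteMeasure ν] (hf : Measurable f)
    (hg : Measurable g) (hfb : ∀ x, |f x| ≤ b) (hgb : ∀ x, |g x| ≤ b) :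
    |klDual μ ν f - klDual μ ν g| ≤ (1 + Real.exp b) * ∫ x, |f x - g x| ∂(μ + ν) := by
  have hdist : ∀ m : Measure X, IsFiniteMeasure m → Integrable (fun x => |f x - g x|) m :=
    fun m _ => ((integrable_of_abs_le hf hfb).sub (integrable_of_abs_le hg hgb)).abs
  have hdiff : klDual μ ν f - klDual μ ν g
      = ∫ x, (f x - g x) ∂μ - ∫ x, (Real.exp (f x) - Real.exp (g x)) ∂ν := by
    have hef := integrable_exp_of_abs_le (μ := ν) hf hfb
    have heg := integrable_exp_of_abs_le (μ := ν) hg hgb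
    rw [klDual, klDual, integral_sub (integrable_of_abs_le hf hfb) (integrable_of_abs_le hg hgb),
      integral_sub hef heg, integral_sub hef (integrable_const 1),
      integral_sub heg (integrable_const 1)]
    ring
  have hμ : |∫ x, (f x - g x) ∂μ| ≤ ∫ x, |f x - g x| ∂μ := abs_integral_le_integral_abs
  have hν : |∫ x, (Real.exp (f x) - Real.exp (g x)) ∂ν| ≤ Real.exp b * ∫ x, |f x - g x| ∂ν :=
    calc |∫ x, (Real.exp (f x) - Real.exp (g x)) ∂ν|
        ≤ ∫ x, |Real.exp (f x) - Real.exp (g x)| ∂ν := abs_integral_le_integral_abs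
      _ ≤ ∫ x, Real.exp b * |f x - g x| ∂ν :=
          integral_mono_of_nonneg (.of_forall fun x => abs_nonneg _) ((hdist ν ‹_›).const_mul _)
            (.of_forall fun x => abs_exp_sub_exp_le (le_of_abs_le (hfb x)) (le_of_abs_le (hgb x)))
      _ = Real.exp b * ∫ x, |f x - g x| ∂ν := integral_const_mul _ _
  have hμ0 : 0 ≤ ∫ x, |f x - g x| ∂μ := integral_nonneg fun x => abs_nonneg _
  have hν0 : 0 ≤ ∫ x, |f x - g x| ∂ν := integral_nonneg fun x => abs_nonneg _
  rw [integral_add_measure (hdist μ ‹_›) (hdist ν ‹_›), hdiff]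
  nlinarith [abs_sub (∫ x, (f x - g x) ∂μ) (∫ x, (Real.exp (f x) - Real.exp (g x)) ∂ν),
    Real.exp_pos b]

end Integrals

section Approximation

variable {X : Type*} [MetricSpace X] [MeasurableSpace X] [BorelSpace X] {μ ν : Measure X}
  {f : X → ℝ} {b : ℝ}

lemma exists_continuous_abs_le_integral_abs_sub_le (m : Measure X) [IsFiniteMeasure m]
    (hf : Measurable f) (hb : ∀ x, |f x| ≤ b) {ε : ℝ} (hε : 0 < ε) :
    ∃ g : X → ℝ, Continuous g ∧ (∀ x, |g x| ≤ b) ∧ ∫ x, |f x - g x| ∂m ≤ ε := by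
  have hfm : Integrable f m := integrable_of_abs_le hf hb
  obtain ⟨g₀, hg₀, hg₀m⟩ := hfm.exists_boundedContinuous_integral_sub_le hε
  refine ⟨fun x => max (min (g₀ x) b) (-b), by fun_prop, fun x => abs_le.2 ⟨le_max_right _ _,
    max_le (min_le_right _ _) (by linarith [abs_nonneg (f x), hb x])⟩, ?_⟩
  -- clamping to `[-b, b]` is 1-Lipschitz and fixes `f`
  have hclamp : ∀ x, |f x - max (min (g₀ x) b) (-b)| ≤ ‖f x - g₀ x‖ := fun x => by
    obtain ⟨h1, h2⟩ := abs_le.1 (hb x)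
    calc |f x - max (min (g₀ x) b) (-b)|
        = |max (min (f x) b) (-b) - max (min (g₀ x) b) (-b)| := by
          rw [min_eq_left h2, max_eq_left h1]
      _ ≤ |min (f x) b - min (g₀ x) b| := abs_max_sub_max_le_abs _ _ _
      _ ≤ ‖f x - g₀ x‖ := by simpa using abs_min_sub_min_le_max (f x) b (g₀ x) b
  exact (integral_mono_of_nonneg (.of_forall fun x => abs_nonneg _)
    (hfm.sub hg₀m).norm (.of_forall hclamp)).trans hg₀

lemma exists_continuous_klDual_gt [IsFiniteMeasure μ] [IsFiniteMeasure ν] {c : ℝ}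
    (hc : (c : EReal) < KL μ ν) : ∃ f : X → ℝ, Continuous f ∧ c < klDual μ ν f := by
  rcases lt_or_ge c 0 with hc0 | hc0
  · exact ⟨0, continuous_const, by simpa [klDual] using hc0⟩
  obtain ⟨f, hf, ⟨b, hb⟩, hcf⟩ :
      ∃ f : X → ℝ, Measurable f ∧ (∃ b, ∀ x, |f x| ≤ b) ∧ c < klDual μ ν f := by
    by_cases hac : μ ≪ ν
    · refine exists_klDual_gt_of_ac hac ?_
      rwa [← EReal.coe_ennreal_lt_coe_ennreal_iff, EReal.coe_ennreal_ofReal, max_eq_left hc0]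
    · exact exists_klDual_gt_of_not_ac hac c
  set δ := klDual μ ν f - c
  have hδ : 0 < δ := sub_pos.2 hcf
  obtain ⟨g, hg, hgb, hfg⟩ := exists_continuous_abs_le_integral_abs_sub_le (μ + ν) hf hb
    (ε := δ / (2 * (1 + Real.exp b))) (by have := Real.exp_pos b; positivity)
  refine ⟨g, hg, ?_⟩
  have hclose := abs_klDual_sub_klDual_le (μ := μ) (ν := ν) hf hg.measurable hb hgb
  have : (1 + Real.exp b) * ∫ x, |f x - g x| ∂(μ + ν) ≤ δ / 2 := by
    calc _ ≤ (1 + Real.exp b) * (δ / (2 * (1 + Real.exp b))) := by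
          gcongr
      _ = δ / 2 := by field_simp
  linarith [(abs_le.1 hclose).2]

end Approximation

section WeakConvergence

variable {X : Type*} [MeasurableSpace X] [TopologicalSpace X] {μs : ℕ → Measure X}
  {μ : Measure X}

lemma WkTendsto.isProbabilityMeasure [∀ n, IsProbabilityMeasure (μs n)] (h : WkTendsto μs μ) :
    IsProbabilityMeasure μ := by
  have h1 := h (fun _ => 1) continuous_const
  simp only [integral_const, probReal_univ, smul_eq_mul, mul_one] at h1
  exact ⟨(ENNReal.toReal_eq_one_iff _).1 (tendsto_nhds_unique tendsto_const_nhds h1).symm⟩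

lemma WkTendsto.map [OpensMeasurableSpace X] {W : Type*} [MeasurableSpace W] [TopologicalSpace W]
    [PseudoMetrizableSpace W] [BorelSpace W] (h : WkTendsto μs μ) {π : X → W}
    (hπ : Continuous π) : WkTendsto (fun n => (μs n).map π) (μ.map π) := by
  intro u hu
  simp only [integral_map hπ.aemeasurable hu.aestronglyMeasurable]
  exact h (u ∘ π) (hu.comp hπ)

lemma WkTendsto.eq [PseudoMetrizableSpace X] [BorelSpace X] {ν : Measure X} [IsFiniteMeasure μ]
    [IsFiniteMeasure ν] (hμ : WkTendsto μs μ) (hν : WkTendsto μs ν) : μ = ν :=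
  ext_of_forall_integral_eq_of_IsFiniteMeasure fun f =>
    tendsto_nhds_unique (hμ f f.continuous) (hν f f.continuous)

lemma wkTendsto_toMeasure_iff [CompactSpace X] [OpensMeasurableSpace X]
    {μs : ℕ → ProbabilityMeasure X} {μ : ProbabilityMeasure X} :
    WkTendsto (fun n => (μs n : Measure X)) μ ↔ Tendsto μs atTop (𝓝 μ) := by
  rw [ProbabilityMeasure.tendsto_iff_forall_integral_tendsto]
  exact ⟨fun h f => h f f.continuous,
    fun h g hg => h (BoundedContinuousFunction.mkOfCompact ⟨g, hg⟩)⟩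

lemma WkTendsto.prod [CompactSpace X] [SecondCountableTopology X] [PseudoMetrizableSpace X]
    [OpensMeasurableSpace X] {Y : Type*} [MeasurableSpace Y] [TopologicalSpace Y] [CompactSpace Y]
    [SecondCountableTopology Y] [PseudoMetrizableSpace Y] [OpensMeasurableSpace Y]
    [∀ n, IsProbabilityMeasure (μs n)] [IsProbabilityMeasure μ] {νs : ℕ → Measure Y}
    {ν : Measure Y} [∀ n, IsProbabilityMeasure (νs n)] [IsProbabilityMeasure ν]
    (hμ : WkTendsto μs μ) (hν : WkTendsto νs ν) :
    WkTendsto (fun n => (μs n).prod (νs n)) (μ.prod ν) := by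
  have hμ' := wkTendsto_toMeasure_iff (μs := fun n => ⟨μs n, inferInstance⟩)
    (μ := ⟨μ, inferInstance⟩) |>.1 hμ
  have hν' := wkTendsto_toMeasure_iff (μs := fun n => ⟨νs n, inferInstance⟩)
    (μ := ⟨ν, inferInstance⟩) |>.1 hν
  exact wkTendsto_toMeasure_iff.2 ((ProbabilityMeasure.continuous_prod.tendsto _).comp
    (hμ'.prodMk_nhds hν'))

lemma WkTendsto.tendsto_integral_of_tendstoUniformly [CompactSpace X] [OpensMeasurableSpace X]
    [∀ n, IsProbabilityMeasure (μs n)] (h : WkTendsto μs μ) {gs : ℕ → X → ℝ} {g : X → ℝ}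
    (hgs : ∀ n, Continuous (gs n)) (hg : Continuous g) (hgu : TendstoUniformly gs g atTop) :
    Tendsto (fun n => ∫ x, gs n x ∂μs n) atTop (𝓝 (∫ x, g x ∂μ)) := by
  have hsmall : Tendsto (fun n => ∫ x, gs n x ∂μs n - ∫ x, g x ∂μs n) atTop (𝓝 0) := by
    refine Metric.tendsto_nhds.2 fun ε hε => ?_
    filter_upwards [Metric.tendstoUniformly_iff.1 hgu (ε / 2) (half_pos hε)] with n hn
    rw [dist_zero_right, ← integral_sub
      ((hgs n).integrable_of_hasCompactSupport (.of_compactSpace _))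
      (hg.integrable_of_hasCompactSupport (.of_compactSpace _))]
    calc ‖∫ x, (gs n x - g x) ∂μs n‖ ≤ ε / 2 * (μs n).real univ :=
          norm_integral_le_of_norm_le_const (.of_forall fun x => by
            rw [← dist_eq_norm, dist_comm]; exact (hn x).le)
      _ < ε := by simp [half_lt_self hε]
  simpa using hsmall.add (h g hg)

end WeakConvergence

lemma coe_add_mul_le_of_forall_lt {x η : ℝ} (hη : 0 ≤ η) {K : ℝ≥0∞} {L : EReal}
    (h : ∀ c : ℝ, (c : EReal) < K → ((x + η * c : ℝ) : EReal) ≤ L) :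
    (x : EReal) + η * K ≤ L := by
  induction K using ENNReal.recTopCoe with
  | top =>
    rcases hη.eq_or_lt with rfl | hη
    · simpa using h (-1) (by rw [EReal.coe_ennreal_top]; exact EReal.coe_lt_top _)
    rw [EReal.coe_ennreal_top, EReal.mul_top_of_pos (by exact_mod_cast hη),
      EReal.add_top_of_ne_bot (EReal.coe_ne_bot _)]
    have hlim : Tendsto (fun c : ℝ => ((x + η * c : ℝ) : EReal)) atTop (𝓝 ⊤) :=
      EReal.tendsto_coe_nhds_top_iff.2
        (tendsto_atTop_add_const_left _ x (tendsto_id.const_mul_atTop hη))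
    exact le_of_tendsto hlim (.of_forall fun c => h c (by simp))
  | coe k =>
    rw [EReal.coe_nnreal_eq_coe_real] at h ⊢
    have hlim : Tendsto (fun c : ℝ => ((x + η * c : ℝ) : EReal)) (𝓝[<] (k : ℝ))
        (𝓝 ((x + η * k : ℝ) : EReal)) :=
      (continuous_coe_real_ereal.comp (by fun_prop)).continuousAt.tendsto.mono_left
        nhdsWithin_le_nhds
    simpa using le_of_tendsto hlim
      (eventually_nhdsWithin_of_forall fun c hc => h c (EReal.coe_lt_coe_iff.2 hc))

/-- Γ-liminf inequality for the rescaled entropic cell problems.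
If `gⁿ → g` uniformly, `ηⁿ → η ∈ [0,∞)`, `σⁿ → σ`, `ρⁿ → ρ`, `λⁿ → λ` weakly*, and
`λⁿ ∈ Π(σⁿ, ρⁿ)`, then `λ ∈ Π(σ, ρ)` and
`∫ g dλ + η·KL(λ|σ⊗ρ) ≤ liminf (∫ gⁿ dλⁿ + ηⁿ·KL(λⁿ|σⁿ⊗ρⁿ))` (in the extended reals,
with the convention `0·∞ = 0`). -/
theorem stmt6 {Z Y : Type*}
    [MetricSpace Z] [CompactSpace Z] [MeasurableSpace Z] [BorelSpace Z]
    [MetricSpace Y] [CompactSpace Y] [MeasurableSpace Y] [BorelSpace Y]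
    (gs : ℕ → Z × Y → ℝ) (g : Z × Y → ℝ)
    (hgc : ∀ n, Continuous (gs n)) (hg : Continuous g)
    (hgu : TendstoUniformly gs g atTop)
    (ηs : ℕ → ℝ) (η : ℝ) (hηs : ∀ n, 0 ≤ ηs n) (hη : 0 ≤ η)
    (hηlim : Tendsto ηs atTop (nhds η))
    (σs : ℕ → Measure Z) (σ : Measure Z)
    [∀ n, IsProbabilityMeasure (σs n)] [IsProbabilityMeasure σ] (hσ : WkTendsto σs σ)
    (ρs : ℕ → Measure Y) (ρ : Measure Y)
    [∀ n, IsProbabilityMeasure (ρs n)] [IsProbabilityMeasure ρ] (hρ : WkTendsto ρs ρ)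
    (ls : ℕ → Measure (Z × Y)) (l : Measure (Z × Y)) [∀ n, IsProbabilityMeasure (ls n)]
    (hl1 : ∀ n, (ls n).map Prod.fst = σs n) (hl2 : ∀ n, (ls n).map Prod.snd = ρs n)
    (hlw : WkTendsto ls l) :
    l.map Prod.fst = σ ∧ l.map Prod.snd = ρ ∧
      ((∫ p, g p ∂l : ℝ) : EReal) + (η : EReal) * (KL l (prodM σ ρ) : EReal) ≤
        liminf (fun n => ((∫ p, gs n p ∂ls n : ℝ) : EReal) +
          (ηs n : EReal) * (KL (ls n) (prodM (σs n) (ρs n)) : EReal)) atTop := by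
  have := hlw.isProbabilityMeasure
  simp only [prodM_eq_prod]
  refine ⟨(by simpa only [hl1] using hlw.map continuous_fst : WkTendsto σs _).eq hσ,
    (by simpa only [hl2] using hlw.map continuous_snd : WkTendsto ρs _).eq hρ,
    coe_add_mul_le_of_forall_lt hη fun c hc => ?_⟩
  obtain ⟨f, hf, hcf⟩ := exists_continuous_klDual_gt hc
  obtain ⟨b, hb⟩ := isCompact_univ.exists_bound_of_continuousOn hf.continuousOn
  have hconv : Tendsto (fun n => ∫ p, gs n p ∂ls n + ηs n * klDual (ls n) ((σs n).prod (ρs n)) f)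
      atTop (𝓝 (∫ p, g p ∂l + η * klDual l (σ.prod ρ) f)) :=
    (hlw.tendsto_integral_of_tendstoUniformly hgc hg hgu).add (hηlim.mul ((hlw f hf).sub
      (hσ.prod hρ _ (by fun_prop))))
  calc ((∫ p, g p ∂l + η * c : ℝ) : EReal)
      ≤ ((∫ p, g p ∂l + η * klDual l (σ.prod ρ) f : ℝ) : EReal) := by
        gcongr
    _ = liminf (fun n => ((∫ p, gs n p ∂ls n + ηs n * klDual (ls n) ((σs n).prod (ρs n)) f : ℝ)
          : EReal)) atTop := (EReal.tendsto_coe.2 hconv).liminf_eq.symm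
    _ ≤ _ := liminf_le_liminf (.of_forall fun n => by
        rw [EReal.coe_add, EReal.coe_mul]
        gcongr
        · exact EReal.coe_nonneg.2 (hηs n)
        · exact klDual_le_KL hf.measurable fun x => by simpa using hb x (mem_univ x))
end
end

section
/- Let X = [0,1]^d, let Y ⊂ ℝ^d be compact and convex, and let μ be a Borel probability measure on X. Then (Π(μ), 𝒲) is a geodesic space: for all π⁰, π¹ ∈ Π(μ) there exists a curve [0,1] ∋ s ↦ π(s) ∈ Π(μ) with π(0) = π⁰, π(1) = π¹ and 𝒲(π(s), π(s')) = |s−s'| · 𝒲(π⁰, π¹) for all s, s' ∈ [0,1]. -/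
open MeasureTheory Set Filter
open scoped ENNReal Classical

noncomputable section

abbrev E (d : ℕ) : Type := EuclideanSpace ℝ (Fin d)

/-- Optimal-transport cost with cost function `c`. -/
noncomputable def OTC {A B : Type*} [MeasurableSpace A] [MeasurableSpace B]
    (c : A → B → ℝ≥0∞) (α : Measure A) (β : Measure B) : ℝ≥0∞ :=
  ⨅ (γ : Measure (A × B)) (_ : γ.map Prod.fst = α) (_ : γ.map Prod.snd = β),
    ∫⁻ p, c p.1 p.2 ∂γ

/-- Wasserstein-1 distance. -/
noncomputable def W1 {S : Type*} [MeasurableSpace S] [PseudoEMetricSpace S]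
    (α β : Measure S) : ℝ≥0∞ :=
  OTC edist α β

/-- Disintegration (conditional kernel) of a measure on a product space. -/
noncomputable def disint {α Ω : Type*} [MeasurableSpace α] [MeasurableSpace Ω]
    [StandardBorelSpace Ω] [Nonempty Ω] (π : Measure (α × Ω)) (x : α) : Measure Ω :=
  if h : IsFiniteMeasure π then
    haveI := h
    Measure.condKernel π x
  else 0

/-- The vertical transport metric `𝒲(π, π') = ∫ W_Y(π_x, π'_x) dμ(x)`. -/
noncomputable def VW {α Ω : Type*} [MeasurableSpace α] [MeasurableSpace Ω] [PseudoEMetricSpace Ω]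
    [StandardBorelSpace Ω] [Nonempty Ω]
    (μ : Measure α) (π π' : Measure (α × Ω)) : ℝ≥0∞ :=
  ∫⁻ x, W1 (disint π x) (disint π' x) ∂μ

/-- Euclidean distance on `ℝ^d × ℝ^d = ℝ^{2d}`. -/
noncomputable def edistE2 {d₁ d₂ : ℕ} (p q : E d₁ × E d₂) : ℝ≥0∞ :=
  ENNReal.ofReal (Real.sqrt (dist p.1 q.1 ^ 2 + dist p.2 q.2 ^ 2))

/-- The cube `X = [0,1]^d`. -/
def Xcube (d : ℕ) : Set (E d) := {x | ∀ i, x i ∈ Icc (0:ℝ) 1}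

/-! The geodesic is the mixture `π(s) = (1 - s) π⁰ + s π¹`: its disintegration is a.e. the
mixture of the disintegrations, so it suffices that `s ↦ α_s := (1 - s) α + s β` is a
constant-speed `W₁`-geodesic between probability measures on `Y`. Adding and scaling couplings
shows that `W₁` is jointly convex, whence `W₁(α_s, α_{s'}) ≤ |s - s'| W₁(α, β)`. The triangle
inequality (via the gluing of couplings along disintegrations) along `α, α_s, α_{s'}, β` then
forces equality, since `W₁(α, β) ≤ diam Y < ∞`. -/

section Gluing

open ProbabilityTheory

variable {A B C : Type*} [MeasurableSpace A] [MeasurableSpace B] [MeasurableSpace C]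

theorem MeasureTheory.Measure.compProd_prod_map_fst (β : Measure B) [SFinite β]
    (κ : Kernel B A) [IsSFiniteKernel κ] (η : Kernel B C) [IsMarkovKernel η] :
    (β ⊗ₘ (κ ×ₖ η)).map (Prod.map id Prod.fst) = β ⊗ₘ κ := by
  rw [← Measure.compProd_map measurable_fst, ← Kernel.fst_eq, Kernel.fst_prod]

theorem MeasureTheory.Measure.compProd_prod_map_snd (β : Measure B) [SFinite β]
    (κ : Kernel B A) [IsMarkovKernel κ] (η : Kernel B C) [IsSFiniteKernel η] :
    (β ⊗ₘ (κ ×ₖ η)).map (Prod.map id Prod.snd) = β ⊗ₘ η := by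
  rw [← Measure.compProd_map measurable_snd, ← Kernel.snd_eq, Kernel.snd_prod]

theorem MeasureTheory.Measure.exists_map_eq_of_map_snd_eq_map_fst [StandardBorelSpace A]
    [Nonempty A] [StandardBorelSpace C] [Nonempty C] {γ₁ : Measure (A × B)}
    {γ₂ : Measure (B × C)} [IsFiniteMeasure γ₁] [IsFiniteMeasure γ₂]
    (h : γ₁.map Prod.snd = γ₂.map Prod.fst) :
    ∃ m : Measure (A × B × C), m.map (fun p => (p.1, p.2.1)) = γ₁ ∧ m.map Prod.snd = γ₂ := by
  set σ := γ₁.map Prod.swap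
  have hσ : γ₂.fst ⊗ₘ σ.condKernel = σ := by
    have : σ.fst = γ₂.fst := by rw [Measure.fst_map_swap]; exact h
    rw [← this, σ.disintegrate]
  -- glue the two conditional kernels over the common marginal on `B`
  set m := γ₂.fst ⊗ₘ (σ.condKernel ×ₖ γ₂.condKernel)
  have hf : Measurable fun p : B × A × C => (p.2.1, p.1, p.2.2) := by fun_prop
  refine ⟨m.map fun p => (p.2.1, p.1, p.2.2), ?_, ?_⟩
  · rw [Measure.map_map (by fun_prop) hf]
    calc m.map (fun p => (p.2.1, p.1)) = (m.map (Prod.map id Prod.fst)).map Prod.swap := by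
          rw [Measure.map_map measurable_swap (by fun_prop)]; rfl
      _ = γ₁ := by
          rw [Measure.compProd_prod_map_fst, hσ, Measure.map_map measurable_swap measurable_swap,
            Prod.swap_swap_eq, Measure.map_id]
  · rw [Measure.map_map measurable_snd hf]
    exact (Measure.compProd_prod_map_snd _ _ _).trans (γ₂.disintegrate _)

end Gluing

section Wasserstein

variable {S : Type*} [PseudoEMetricSpace S] [MeasurableSpace S]

theorem W1_le_lintegral {α β : Measure S} (γ : Measure (S × S)) (h₁ : γ.map Prod.fst = α)
    (h₂ : γ.map Prod.snd = β) : W1 α β ≤ ∫⁻ p, edist p.1 p.2 ∂γ :=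
  (iInf_le _ γ).trans <| (iInf_le _ h₁).trans <| iInf_le _ h₂

theorem W1_zero_zero : W1 (0 : Measure S) 0 = 0 :=
  nonpos_iff_eq_zero.mp <| (W1_le_lintegral 0 (by simp) (by simp)).trans_eq (by simp)

theorem W1_add_le (α₁ α₂ β₁ β₂ : Measure S) :
    W1 (α₁ + α₂) (β₁ + β₂) ≤ W1 α₁ β₁ + W1 α₂ β₂ := by
  refine ENNReal.le_iInf_add_iInf fun γ₁ γ₂ => ENNReal.le_iInf_add_iInf fun h₁ h₂ =>
    ENNReal.le_iInf_add_iInf fun h₁' h₂' => ?_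
  refine (W1_le_lintegral (γ₁ + γ₂) ?_ ?_).trans_eq (lintegral_add_measure _ _ _)
  · rw [Measure.map_add _ _ measurable_fst, h₁, h₂]
  · rw [Measure.map_add _ _ measurable_snd, h₁', h₂']

theorem W1_smul_le {c : ℝ≥0∞} (hc : c ≠ ∞) (α β : Measure S) :
    W1 (c • α) (c • β) ≤ c * W1 α β := by
  rcases eq_or_ne c 0 with rfl | hc₀
  · simp [W1_zero_zero]
  simp only [W1, OTC, ENNReal.mul_iInf_of_ne hc₀ hc]
  refine le_iInf fun γ => le_iInf fun h₁ => le_iInf fun h₂ => ?_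
  refine (W1_le_lintegral (c • γ) ?_ ?_).trans_eq (lintegral_smul_measure _ _)
  · rw [Measure.map_smul, h₁]
  · rw [Measure.map_smul, h₂]

theorem W1_comm (α β : Measure S) : W1 α β = W1 β α := by
  suffices H : ∀ α β : Measure S, W1 β α ≤ W1 α β from le_antisymm (H β α) (H α β)
  intro α β
  refine le_iInf fun γ => le_iInf fun h₁ => le_iInf fun h₂ => ?_
  refine (W1_le_lintegral (γ.map Prod.swap) ?_ ?_).trans ((lintegral_map_le _ _).trans_eq ?_)
  · rwa [Measure.map_map measurable_fst measurable_swap]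
  · rwa [Measure.map_map measurable_snd measurable_swap]
  · exact lintegral_congr fun p => edist_comm _ _

theorem W1_le_ediam {α β : Measure S} [IsProbabilityMeasure α] [IsProbabilityMeasure β]
    {t : Set S} (hα : ∀ᵐ x ∂α, x ∈ t) (hβ : ∀ᵐ y ∂β, y ∈ t) : W1 α β ≤ Metric.ediam t := by
  have hαβ : ∀ᵐ p ∂α.prod β, p.1 ∈ t ∧ p.2 ∈ t :=
    (Measure.quasiMeasurePreserving_fst.ae hα).and (Measure.quasiMeasurePreserving_snd.ae hβ)
  calc W1 α β ≤ ∫⁻ p, edist p.1 p.2 ∂α.prod β :=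
        W1_le_lintegral _ Measure.fst_prod Measure.snd_prod
    _ ≤ ∫⁻ _, Metric.ediam t ∂α.prod β :=
        lintegral_mono_ae <| hαβ.mono fun p hp => Metric.edist_le_ediam_of_mem hp.1 hp.2
    _ = Metric.ediam t := by simp

variable [OpensMeasurableSpace S] [SecondCountableTopology S]

theorem W1_self (α : Measure S) : W1 α α = 0 := by
  refine nonpos_iff_eq_zero.mp <| (W1_le_lintegral (α.map fun x => (x, x)) ?_ ?_).trans_eq ?_
  · rw [Measure.map_map measurable_fst (by fun_prop)]; exact Measure.map_id
  · rw [Measure.map_map measurable_snd (by fun_prop)]; exact Measure.map_id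
  · rw [lintegral_map measurable_edist (by fun_prop)]; simp

variable [StandardBorelSpace S] [Nonempty S]

theorem W1_le_lintegral_add_lintegral {α β ν : Measure S} [IsFiniteMeasure α]
    [IsFiniteMeasure β] (γ₁ γ₂ : Measure (S × S))
    (h₁ : γ₁.map Prod.fst = α) (h₁' : γ₁.map Prod.snd = β)
    (h₂ : γ₂.map Prod.fst = β) (h₂' : γ₂.map Prod.snd = ν) :
    W1 α ν ≤ ∫⁻ p, edist p.1 p.2 ∂γ₁ + ∫⁻ p, edist p.1 p.2 ∂γ₂ := by
  subst h₁ h₂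
  have := Measure.isFiniteMeasure_of_map (μ := γ₁) measurable_fst.aemeasurable
  have := Measure.isFiniteMeasure_of_map (μ := γ₂) measurable_fst.aemeasurable
  obtain ⟨m, hm₁, hm₂⟩ := Measure.exists_map_eq_of_map_snd_eq_map_fst h₁'
  have hm₁₃ : Measurable fun p : S × S × S => (p.1, p.2.2) := by fun_prop
  refine (W1_le_lintegral (m.map fun p => (p.1, p.2.2)) ?_ ?_).trans ?_
  · rw [Measure.map_map measurable_fst hm₁₃, ← hm₁,
      Measure.map_map measurable_fst (by fun_prop)]
    rfl
  · rw [Measure.map_map measurable_snd hm₁₃, ← h₂', ← hm₂,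
      Measure.map_map measurable_snd measurable_snd]
    rfl
  rw [← hm₁, ← hm₂, lintegral_map measurable_edist hm₁₃,
    lintegral_map measurable_edist (by fun_prop), lintegral_map measurable_edist measurable_snd,
    ← lintegral_add_left (by fun_prop)]
  exact lintegral_mono fun p => edist_triangle _ _ _

theorem W1_triangle (α β ν : Measure S) [IsFiniteMeasure α] [IsFiniteMeasure β] :
    W1 α ν ≤ W1 α β + W1 β ν :=
  ENNReal.le_iInf_add_iInf fun γ₁ γ₂ => ENNReal.le_iInf_add_iInf fun h₁ h₂ =>
    ENNReal.le_iInf_add_iInf fun h₁' h₂' => W1_le_lintegral_add_lintegral γ₁ γ₂ h₁ h₁' h₂ h₂'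

end Wasserstein

theorem ENNReal.ofReal_one_sub_add_ofReal {s : ℝ} (hs : s ∈ Icc (0 : ℝ) 1) :
    ENNReal.ofReal (1 - s) + ENNReal.ofReal s = 1 := by
  rw [← ENNReal.ofReal_add (by linarith [hs.2]) hs.1]; simp

section Mixture

variable {S : Type*} [MeasurableSpace S]

def mixture (s : ℝ) (α β : Measure S) : Measure S :=
  ENNReal.ofReal (1 - s) • α + ENNReal.ofReal s • β

@[simp] theorem mixture_zero (α β : Measure S) : mixture 0 α β = α := by simp [mixture]

@[simp] theorem mixture_one (α β : Measure S) : mixture 1 α β = β := by simp [mixture]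

@[simp] theorem mixture_apply (s : ℝ) (α β : Measure S) (t : Set S) :
    mixture s α β t = ENNReal.ofReal (1 - s) * α t + ENNReal.ofReal s * β t := rfl

theorem mixture_self {s : ℝ} (hs : s ∈ Icc (0 : ℝ) 1) (α : Measure S) :
    mixture s α α = α := by
  rw [mixture, ← add_smul, ENNReal.ofReal_one_sub_add_ofReal hs, one_smul]

theorem map_mixture {T : Type*} [MeasurableSpace T] {f : S → T} (hf : Measurable f) (s : ℝ)
    (α β : Measure S) : (mixture s α β).map f = mixture s (α.map f) (β.map f) := by
  simp only [mixture, Measure.map_add _ _ hf, Measure.map_smul]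

instance (s : ℝ) (α β : Measure S) [IsFiniteMeasure α] [IsFiniteMeasure β] :
    IsFiniteMeasure (mixture s α β) :=
  have := α.smul_finite (ENNReal.ofReal_ne_top (r := 1 - s))
  have := β.smul_finite (ENNReal.ofReal_ne_top (r := s))
  inferInstanceAs (IsFiniteMeasure (_ + _))

theorem isProbabilityMeasure_mixture {s : ℝ} (hs : s ∈ Icc (0 : ℝ) 1) (α β : Measure S)
    [IsProbabilityMeasure α] [IsProbabilityMeasure β] : IsProbabilityMeasure (mixture s α β) :=
  ⟨by simp [ENNReal.ofReal_one_sub_add_ofReal hs]⟩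

variable [PseudoEMetricSpace S] [OpensMeasurableSpace S] [SecondCountableTopology S]

theorem W1_mixture_le (α β : Measure S) {s s' : ℝ} (hs : 0 ≤ s) (hss' : s ≤ s')
    (hs' : s' ≤ 1) :
    W1 (mixture s α β) (mixture s' α β) ≤ ENNReal.ofReal (s' - s) * W1 α β := by
  -- both mixtures share the part `(1 - s') α + s β`; only a mass `s' - s` of `α` has to move
  have split : ∀ γ : Measure S, ENNReal.ofReal (1 - s) • γ =
      ENNReal.ofReal (1 - s') • γ + ENNReal.ofReal (s' - s) • γ := fun γ => by
    rw [← add_smul, ← ENNReal.ofReal_add (by linarith) (by linarith)]; ring_nf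
  have split' : ∀ γ : Measure S, ENNReal.ofReal s' • γ =
      ENNReal.ofReal s • γ + ENNReal.ofReal (s' - s) • γ := fun γ => by
    rw [← add_smul, ← ENNReal.ofReal_add hs (by linarith)]; ring_nf
  set common := ENNReal.ofReal (1 - s') • α + ENNReal.ofReal s • β
  calc W1 (mixture s α β) (mixture s' α β)
      = W1 (common + ENNReal.ofReal (s' - s) • α) (common + ENNReal.ofReal (s' - s) • β) := by
        rw [mixture, mixture, split, split']; simp only [common]; congr 1 <;> abel
    _ ≤ W1 common common + W1 (ENNReal.ofReal (s' - s) • α) (ENNReal.ofReal (s' - s) • β) :=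
        W1_add_le _ _ _ _
    _ ≤ ENNReal.ofReal (s' - s) * W1 α β := by
        rw [W1_self, zero_add]; exact W1_smul_le ENNReal.ofReal_ne_top _ _

variable [StandardBorelSpace S] [Nonempty S]

theorem W1_mixture_eq (α β : Measure S) [IsFiniteMeasure α] [IsFiniteMeasure β]
    (hαβ : W1 α β ≠ ∞) {s s' : ℝ} (hs : 0 ≤ s) (hss' : s ≤ s') (hs' : s' ≤ 1) :
    W1 (mixture s α β) (mixture s' α β) = ENNReal.ofReal (s' - s) * W1 α β := by
  refine le_antisymm (W1_mixture_le α β hs hss' hs') ?_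
  have h₀ : W1 α (mixture s α β) ≤ ENNReal.ofReal s * W1 α β := by
    simpa using W1_mixture_le α β le_rfl hs (by linarith)
  have h₁ : W1 (mixture s' α β) β ≤ ENNReal.ofReal (1 - s') * W1 α β := by
    simpa using W1_mixture_le α β (by linarith) hs' le_rfl
  have hfin : ENNReal.ofReal s * W1 α β + ENNReal.ofReal (1 - s') * W1 α β ≠ ∞ := by
    simp [ENNReal.mul_ne_top, hαβ]
  refine (ENNReal.add_le_add_iff_right hfin).mp ?_
  calc ENNReal.ofReal (s' - s) * W1 α β +
        (ENNReal.ofReal s * W1 α β + ENNReal.ofReal (1 - s') * W1 α β)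
      = W1 α β := by
        rw [← add_mul, ← add_mul, ← ENNReal.ofReal_add hs (by linarith),
          ← ENNReal.ofReal_add (by linarith) (by linarith)]
        ring_nf; simp
    _ ≤ W1 α (mixture s α β) + W1 (mixture s α β) (mixture s' α β) + W1 (mixture s' α β) β :=
        (W1_triangle _ (mixture s' α β) _).trans (add_le_add_left (W1_triangle _ _ _) _)
    _ ≤ ENNReal.ofReal s * W1 α β + W1 (mixture s α β) (mixture s' α β) +
          ENNReal.ofReal (1 - s') * W1 α β := by gcongr
    _ = _ := by ring

theorem W1_mixture_eq_abs (α β : Measure S) [IsFiniteMeasure α] [IsFiniteMeasure β]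
    (hαβ : W1 α β ≠ ∞) {s s' : ℝ} (hs : s ∈ Icc (0 : ℝ) 1) (hs' : s' ∈ Icc (0 : ℝ) 1) :
    W1 (mixture s α β) (mixture s' α β) = ENNReal.ofReal |s - s'| * W1 α β := by
  rcases le_total s s' with h | h
  · rw [abs_sub_comm, abs_of_nonneg (sub_nonneg.mpr h)]
    exact W1_mixture_eq α β hαβ hs.1 h hs'.2
  · rw [abs_of_nonneg (sub_nonneg.mpr h), W1_comm]
    exact W1_mixture_eq α β hαβ hs'.1 h hs.2

end Mixture

section Disintegration

open ProbabilityTheory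

variable {α Ω : Type*} [MeasurableSpace α] [MeasurableSpace Ω]

def ProbabilityTheory.Kernel.mixture (s : ℝ) (κ η : Kernel α Ω) : Kernel α Ω where
  toFun x := _root_.mixture s (κ x) (η x)
  measurable' := Measure.measurable_of_measurable_coe _ fun _ ht =>
    ((κ.measurable_coe ht).const_mul _).add ((η.measurable_coe ht).const_mul _)

theorem ProbabilityTheory.Kernel.mixture_apply (s : ℝ) (κ η : Kernel α Ω) (x : α) :
    κ.mixture s η x = _root_.mixture s (κ x) (η x) := rfl

theorem ProbabilityTheory.Kernel.isMarkovKernel_mixture {s : ℝ} (hs : s ∈ Icc (0 : ℝ) 1)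
    (κ η : Kernel α Ω) [IsMarkovKernel κ] [IsMarkovKernel η] : IsMarkovKernel (κ.mixture s η) :=
  ⟨fun x => isProbabilityMeasure_mixture hs (κ x) (η x)⟩

theorem MeasureTheory.Measure.compProd_mixture {s : ℝ} (hs : s ∈ Icc (0 : ℝ) 1)
    (μ : Measure α) [SFinite μ] (κ η : Kernel α Ω) [IsMarkovKernel κ] [IsMarkovKernel η] :
    μ ⊗ₘ κ.mixture s η = mixture s (μ ⊗ₘ κ) (μ ⊗ₘ η) := by
  have := Kernel.isMarkovKernel_mixture hs κ η
  ext t ht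
  simp only [Measure.compProd_apply ht, Kernel.mixture_apply, mixture_apply]
  rw [lintegral_add_left ((Kernel.measurable_kernel_prodMk_left ht).const_mul _),
    lintegral_const_mul' _ _ ENNReal.ofReal_ne_top, lintegral_const_mul' _ _ ENNReal.ofReal_ne_top]

variable [StandardBorelSpace Ω] [Nonempty Ω]

theorem ae_condKernel_mixture {ρ₀ ρ₁ : Measure (α × Ω)} [IsFiniteMeasure ρ₀]
    [IsFiniteMeasure ρ₁] (h : ρ₀.fst = ρ₁.fst) {s : ℝ} (hs : s ∈ Icc (0 : ℝ) 1) :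
    ∀ᵐ x ∂ρ₀.fst, (mixture s ρ₀ ρ₁).condKernel x =
      mixture s (ρ₀.condKernel x) (ρ₁.condKernel x) := by
  have := Kernel.isMarkovKernel_mixture hs ρ₀.condKernel ρ₁.condKernel
  have hfst : (mixture s ρ₀ ρ₁).fst = ρ₀.fst := by
    rw [Measure.fst, map_mixture measurable_fst, ← Measure.fst, ← Measure.fst, ← h,
      mixture_self hs]
  have hdis : mixture s ρ₀ ρ₁ =
      (mixture s ρ₀ ρ₁).fst ⊗ₘ ρ₀.condKernel.mixture s ρ₁.condKernel := by
    rw [hfst, Measure.compProd_mixture hs, ρ₀.disintegrate, h, ρ₁.disintegrate]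
  filter_upwards [hfst ▸ eq_condKernel_of_measure_eq_compProd _ hdis] with x hx
  exact hx.symm

theorem disint_eq_condKernel (ρ : Measure (α × Ω)) [h : IsFiniteMeasure ρ] :
    disint ρ = ρ.condKernel :=
  funext fun _ => dif_pos h

theorem MeasureTheory.Measure.ae_ae_condKernel_of_ae {ρ : Measure (α × Ω)} [IsFiniteMeasure ρ]
    {p : α × Ω → Prop} (h : ∀ᵐ z ∂ρ, p z) : ∀ᵐ x ∂ρ.fst, ∀ᵐ y ∂ρ.condKernel x, p (x, y) :=
  Measure.ae_ae_of_ae_compProd <| by rwa [ρ.disintegrate]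

variable [PseudoEMetricSpace Ω] [OpensMeasurableSpace Ω] [SecondCountableTopology Ω]

theorem VW_mixture {μ : Measure α} {π₀ π₁ : Measure (α × Ω)} [IsFiniteMeasure π₀]
    [IsFiniteMeasure π₁] (h₀ : π₀.fst = μ) (h₁ : π₁.fst = μ)
    (hfin : ∀ᵐ x ∂μ, W1 (disint π₀ x) (disint π₁ x) ≠ ∞) {s s' : ℝ} (hs : s ∈ Icc (0 : ℝ) 1)
    (hs' : s' ∈ Icc (0 : ℝ) 1) :
    VW μ (mixture s π₀ π₁) (mixture s' π₀ π₁) = ENNReal.ofReal |s - s'| * VW μ π₀ π₁ := by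
  simp only [VW, disint_eq_condKernel] at hfin ⊢
  rw [← lintegral_const_mul' _ _ ENNReal.ofReal_ne_top]
  have h := h₀.trans h₁.symm
  refine lintegral_congr_ae ?_
  filter_upwards [h₀ ▸ ae_condKernel_mixture h hs, h₀ ▸ ae_condKernel_mixture h hs', hfin]
    with x hx hx' hfinx
  rw [hx, hx']
  exact W1_mixture_eq_abs _ _ hfinx hs hs'

end Disintegration

theorem stmt12_general (d : ℕ) (Y : Set (E d)) (hY : IsCompact Y) (μ : Measure (E d))
    (π0 π1 : Measure (E d × E d)) [IsProbabilityMeasure π0] [IsProbabilityMeasure π1]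
    (h0 : π0.map Prod.fst = μ) (h1 : π1.map Prod.fst = μ)
    (h0s : π0 (Xcube d ×ˢ Y)ᶜ = 0) (h1s : π1 (Xcube d ×ˢ Y)ᶜ = 0) :
    ∃ π : ℝ → Measure (E d × E d),
      π 0 = π0 ∧ π 1 = π1 ∧
      (∀ s ∈ Icc (0:ℝ) 1, IsProbabilityMeasure (π s) ∧ (π s).map Prod.fst = μ ∧
        (π s) (Xcube d ×ˢ Y)ᶜ = 0) ∧
      ∀ s ∈ Icc (0:ℝ) 1, ∀ s' ∈ Icc (0:ℝ) 1,
        VW μ (π s) (π s') = ENNReal.ofReal |s - s'| * VW μ π0 π1 := by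
  have hsupp : ∀ (π : Measure (E d × E d)) [IsFiniteMeasure π], π.map Prod.fst = μ →
      π (Xcube d ×ˢ Y)ᶜ = 0 → ∀ᵐ x ∂μ, ∀ᵐ y ∂π.condKernel x, y ∈ Y := by
    rintro π _ rfl hπ
    exact Measure.ae_ae_condKernel_of_ae <| mem_of_superset (mem_ae_iff.mpr hπ) fun _ hp => hp.2
  have hfin : ∀ᵐ x ∂μ, W1 (disint π0 x) (disint π1 x) ≠ ∞ := by
    filter_upwards [hsupp π0 h0 h0s, hsupp π1 h1 h1s] with x hx₀ hx₁
    rw [disint_eq_condKernel, disint_eq_condKernel]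
    exact ne_top_of_le_ne_top hY.isBounded.ediam_ne_top (W1_le_ediam hx₀ hx₁)
  refine ⟨fun s => mixture s π0 π1, mixture_zero _ _, mixture_one _ _,
    fun s hs => ⟨isProbabilityMeasure_mixture hs _ _, ?_, by simp [h0s, h1s]⟩,
    fun s hs s' hs' => VW_mixture h0 h1 hfin hs hs'⟩
  rw [map_mixture measurable_fst, h0, h1, mixture_self hs]

/-- `(Π(μ), 𝒲)` is a geodesic space (for `Y` compact and convex): any two
couplings `π⁰, π¹ ∈ Π(μ)` are joined by a constant-speed geodesic for the vertical
transport metric `𝒲`. -/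
theorem stmt12 (d : ℕ) (Y : Set (E d)) (hY : IsCompact Y) (hYc : Convex ℝ Y)
    (μ : Measure (E d)) [IsProbabilityMeasure μ] (hμX : μ (Xcube d)ᶜ = 0)
    (π0 π1 : Measure (E d × E d)) [IsProbabilityMeasure π0] [IsProbabilityMeasure π1]
    (h0 : π0.map Prod.fst = μ) (h1 : π1.map Prod.fst = μ)
    (h0s : π0 (Xcube d ×ˢ Y)ᶜ = 0) (h1s : π1 (Xcube d ×ˢ Y)ᶜ = 0) :
    ∃ π : ℝ → Measure (E d × E d),
      π 0 = π0 ∧ π 1 = π1 ∧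
      (∀ s ∈ Icc (0:ℝ) 1, IsProbabilityMeasure (π s) ∧ (π s).map Prod.fst = μ ∧
        (π s) (Xcube d ×ˢ Y)ᶜ = 0) ∧
      ∀ s ∈ Icc (0:ℝ) 1, ∀ s' ∈ Icc (0:ℝ) 1,
        VW μ (π s) (π s') = ENNReal.ofReal |s - s'| * VW μ π0 π1 :=
  stmt12_general d Y hY μ π0 π1 h0 h1 h0s h1s
end
end

section
/- Let X = Y = [0,1] and let μ be the Lebesgue measure on [0,1]. For each integer n ≥ 1 define r_n : [0,1] → [0,1] by r_n(x) := ⌊2^n x⌋ mod 2, and let ρ^n := (id, r_n)_♯ μ be the pushforward of μ under x ↦ (x, r_n(x)), a probability measure on [0,1]² with first marginal μ. Then 𝒲(ρ^n, ρ^m) = 1/2 for all n ≠ m; in particular the sequence (ρ^n)_n has no 𝒲-Cauchy subsequence, so the metric space (Π(μ), 𝒲) is not compact. -/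
open MeasureTheory Set Filter
open scoped ENNReal Classical

noncomputable section

/-- `r_n(x) = ⌊2^n x⌋ mod 2`. -/
noncomputable def rad (n : ℕ) (x : ℝ) : ℝ := ((⌊(2:ℝ)^n * x⌋ % 2 : ℤ) : ℝ)

/-- `ρ^n = (id, r_n)_♯ (Leb ↾ [0,1])`. -/
noncomputable def rho15 (n : ℕ) : Measure (ℝ × ℝ) :=
  (volume.restrict (Icc (0:ℝ) 1)).map fun x => (x, rad n x)

/-!
Each `ρⁿ` is the push-forward of `μ` to the graph of the measurable map `rₙ`, so its
disintegration is `μ`-a.e. the Dirac mass at `rₙ x`, and `𝒲(ρⁿ, ρᵐ) = ∫ |rₙ - rₘ| dμ`.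
For `n < m`, write `[0, 1)` as the union of the dyadic intervals of length `2⁻ᵐ`: on each
of them `rₙ` and `rₘ` are constant, given by two binary digits of the interval's index `k`.
Pairing the intervals with indices `2j` and `2j + 1`, which share the digit read by `rₙ` and
differ in the digit read by `rₘ`, shows that `|rₙ - rₘ| = 1` on exactly half of `[0, 1]`.
-/

open Function ProbabilityTheory

section Transport

variable {A B : Type*} [MeasurableSpace A] [MeasurableSpace B]
  [MeasurableSingletonClass A] [MeasurableSingletonClass B]

theorem OTC_dirac_dirac (c : A → B → ℝ≥0∞) (a : A) (b : B) :
    OTC c (Measure.dirac a) (Measure.dirac b) = c a b := by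
  apply le_antisymm
  · refine iInf_le_of_le (Measure.dirac (a, b)) <|
      iInf_le_of_le (Measure.map_dirac' measurable_fst _) <|
      iInf_le_of_le (Measure.map_dirac' measurable_snd _) ?_
    rw [lintegral_dirac]
  · refine le_iInf fun γ => le_iInf₂ fun h₁ h₂ => ?_
    have ha : ∀ᵐ p ∂γ, p.1 = a := ae_of_ae_map (p := (· = a)) measurable_fst.aemeasurable <| by
      rw [h₁, ae_dirac_eq]; exact eventually_pure.2 rfl
    have hb : ∀ᵐ p ∂γ, p.2 = b := ae_of_ae_map (p := (· = b)) measurable_snd.aemeasurable <| by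
      rw [h₂, ae_dirac_eq]; exact eventually_pure.2 rfl
    have hγ : γ univ = 1 := by
      rw [← preimage_univ (f := Prod.fst), ← Measure.map_apply measurable_fst .univ, h₁,
        measure_univ]
    rw [lintegral_congr_ae (ha.and hb |>.mono fun p hp => by rw [hp.1, hp.2]),
      lintegral_const, hγ, mul_one]

theorem W1_dirac_dirac {S : Type*} [MeasurableSpace S] [PseudoEMetricSpace S]
    [MeasurableSingletonClass S] (a b : S) :
    W1 (Measure.dirac a) (Measure.dirac b) = edist a b :=
  OTC_dirac_dirac _ a b

end Transport

section Disintegration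

variable {α Ω : Type*} [MeasurableSpace α] [MeasurableSpace Ω] [StandardBorelSpace Ω] [Nonempty Ω]
  (μ : Measure α) [IsFiniteMeasure μ]

theorem disint_map_graph_ae_eq {f : α → Ω} (hf : Measurable f) :
    ∀ᵐ x ∂μ, disint (μ.map fun x => (x, f x)) x = Measure.dirac (f x) := by
  have hfst : (μ.map fun x => (x, f x)).fst = μ := by
    rw [Measure.fst_map_prodMk hf, Measure.map_id']
  have hρ : μ.map (fun x => (x, f x)) =
      (μ.map fun x => (x, f x)).fst ⊗ₘ Kernel.deterministic f hf := by
    rw [hfst, Measure.compProd_deterministic]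
  filter_upwards [hfst ▸ eq_condKernel_of_measure_eq_compProd _ hρ] with x hx
  rw [disint, dif_pos (by infer_instance), ← hx, Kernel.deterministic_apply]

theorem VW_map_graph [PseudoEMetricSpace Ω] {f g : α → Ω} (hf : Measurable f)
    (hg : Measurable g) :
    VW μ (μ.map fun x => (x, f x)) (μ.map fun x => (x, g x)) = ∫⁻ x, edist (f x) (g x) ∂μ := by
  refine lintegral_congr_ae ?_
  filter_upwards [disint_map_graph_ae_eq μ hf, disint_map_graph_ae_eq μ hg] with x hfx hgx
  rw [hfx, hgx, W1_dirac_dirac]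

end Disintegration

theorem measurable_rad (n : ℕ) : Measurable (rad n) :=
  (measurable_from_top (f := fun z : ℤ => ((z % 2 : ℤ) : ℝ))).comp
    (Int.measurable_floor.comp (measurable_const_mul _))

theorem rad_eq_zero_or_one (n : ℕ) (x : ℝ) : rad n x = 0 ∨ rad n x = 1 := by
  rcases Int.emod_two_eq ⌊(2:ℝ) ^ n * x⌋ with h | h <;> simp [rad, h]

theorem floor_two_pow_mul_eq_ediv {n m : ℕ} (h : n ≤ m) (x : ℝ) :
    ⌊(2:ℝ) ^ n * x⌋ = ⌊(2:ℝ) ^ m * x⌋ / 2 ^ (m - n) := by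
  have hx : (2:ℝ) ^ n * x = (2:ℝ) ^ m * x / ((2 ^ (m - n) : ℕ) : ℝ) := by
    rw [← Nat.add_sub_cancel' h]
    push_cast
    rw [pow_add, Nat.add_sub_cancel_left]
    field_simp
  rw [hx, Int.floor_div_natCast]
  push_cast
  rfl

def dyadicIco (m k : ℕ) : Set ℝ := Ico ((k : ℝ) / 2 ^ m) ((k + 1) / 2 ^ m)

theorem measurableSet_dyadicIco (m k : ℕ) : MeasurableSet (dyadicIco m k) :=
  measurableSet_Ico

theorem mem_dyadicIco_iff {m k : ℕ} {x : ℝ} : x ∈ dyadicIco m k ↔ ⌊(2:ℝ) ^ m * x⌋ = k := by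
  have h2m : (0:ℝ) < 2 ^ m := by positivity
  rw [dyadicIco, mem_Ico, div_le_iff₀ h2m, lt_div_iff₀ h2m, Int.floor_eq_iff]
  push_cast
  constructor <;> rintro ⟨h₁, h₂⟩ <;> constructor <;> linarith

theorem pairwise_disjoint_dyadicIco (m : ℕ) : Pairwise (Disjoint on dyadicIco m) := by
  refine fun k l hkl => Set.disjoint_left.2 fun x hk hl => hkl ?_
  rw [mem_dyadicIco_iff] at hk hl
  exact_mod_cast hk.symm.trans hl

theorem biUnion_dyadicIco (m : ℕ) : ⋃ k ∈ Finset.range (2 ^ m), dyadicIco m k = Ico 0 1 := by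
  have h2m : (0:ℝ) < 2 ^ m := by positivity
  have hcast : ((2 ^ m : ℤ) : ℝ) = 2 ^ m := by push_cast; rfl
  ext x
  simp only [mem_iUnion, Finset.mem_range, mem_dyadicIco_iff, exists_prop, mem_Ico]
  rw [← mul_nonneg_iff_of_pos_left h2m, ← mul_lt_iff_lt_one_right h2m, ← Int.floor_nonneg,
    ← hcast, ← Int.floor_lt, hcast]
  constructor
  · rintro ⟨k, hk, hx⟩
    rw [hx]
    exact ⟨Int.natCast_nonneg k, by exact_mod_cast hk⟩
  · rintro ⟨h₀, h₁⟩
    lift ⌊(2:ℝ) ^ m * x⌋ to ℕ using h₀ with k hk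
    exact ⟨k, by exact_mod_cast h₁, rfl⟩

theorem volume_dyadicIco (m k : ℕ) : volume (dyadicIco m k) = (2 ^ m)⁻¹ := by
  rw [dyadicIco, Real.volume_Ico, ← sub_div, add_sub_cancel_left, one_div,
    ENNReal.ofReal_inv_of_pos (by positivity), ENNReal.ofReal_pow zero_le_two, ENNReal.ofReal_ofNat]

theorem rad_eq_of_mem_dyadicIco {n m k : ℕ} (h : n ≤ m) {x : ℝ} (hx : x ∈ dyadicIco m k) :
    rad n x = (k / 2 ^ (m - n) % 2 : ℕ) := by
  rw [rad, floor_two_pow_mul_eq_ediv h, mem_dyadicIco_iff.1 hx]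
  norm_cast

theorem sum_range_two_mul_edist_bit_bit_zero {d : ℕ} (hd : 1 ≤ d) (N : ℕ) :
    ∑ k ∈ Finset.range (2 * N), edist ((k / 2 ^ d % 2 : ℕ) : ℝ) ((k % 2 : ℕ) : ℝ) = N := by
  obtain ⟨e, rfl⟩ : ∃ e, d = e + 1 := ⟨d - 1, by omega⟩
  induction N with
  | zero => simp
  | succ N ih =>
    have hdiv : ∀ k, k / 2 = N → k / 2 ^ (e + 1) = N / 2 ^ e := fun k hk => by
      rw [pow_succ', ← Nat.div_div_eq_div_mul, hk]
    rw [mul_add, mul_one, Finset.sum_range_succ, Finset.sum_range_succ, ih, add_assoc,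
      hdiv (2 * N) (by omega), hdiv (2 * N + 1) (by omega), Nat.cast_succ]
    congr 1
    rcases Nat.mod_two_eq_zero_or_one (N / 2 ^ e) with hb | hb <;>
      simp [hb, Nat.add_mod, edist_dist]

theorem lintegral_edist_rad {n m : ℕ} (h : n < m) :
    ∫⁻ x in Icc 0 1, edist (rad n x) (rad m x) = 2⁻¹ := by
  have hconst : ∀ k, ∫⁻ x in dyadicIco m k, edist (rad n x) (rad m x) =
      edist ((k / 2 ^ (m - n) % 2 : ℕ) : ℝ) ((k % 2 : ℕ) : ℝ) * (2 ^ m)⁻¹ := fun k => by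
    rw [setLIntegral_congr_fun (measurableSet_dyadicIco m k) fun x hx => by
      rw [rad_eq_of_mem_dyadicIco h.le hx, rad_eq_of_mem_dyadicIco le_rfl hx, Nat.sub_self,
        pow_zero, Nat.div_one], setLIntegral_const, volume_dyadicIco]
  obtain ⟨e, rfl⟩ : ∃ e, m = e + 1 := ⟨m - 1, by omega⟩
  rw [← restrict_Ico_eq_restrict_Icc, ← biUnion_dyadicIco (e + 1),
    lintegral_biUnion_finset ((pairwise_disjoint_dyadicIco _).set_pairwise _)
      fun k _ => measurableSet_dyadicIco _ _]
  simp only [hconst]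
  rw [← Finset.sum_mul, pow_succ' 2 e, sum_range_two_mul_edist_bit_bit_zero (by omega), pow_succ',
    ENNReal.mul_inv (by simp) (by simp), Nat.cast_pow, Nat.cast_ofNat, mul_left_comm,
    ENNReal.mul_inv_cancel (by simp) (by simp), mul_one]

instance isProbabilityMeasure_volume_restrict_Icc_zero_one :
    IsProbabilityMeasure (volume.restrict (Icc (0:ℝ) 1)) :=
  ⟨by simp⟩

instance isProbabilityMeasure_rho15 (n : ℕ) : IsProbabilityMeasure (rho15 n) :=
  Measure.isProbabilityMeasure_map (measurable_id.prodMk (measurable_rad n)).aemeasurable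

theorem map_fst_rho15 (n : ℕ) : (rho15 n).map Prod.fst = volume.restrict (Icc (0:ℝ) 1) :=
  Measure.fst_map_prodMk (measurable_rad n) |>.trans Measure.map_id

theorem rho15_compl_Icc_prod_Icc (n : ℕ) : rho15 n ((Icc (0:ℝ) 1 ×ˢ Icc (0:ℝ) 1)ᶜ) = 0 := by
  refine ae_iff.1 <| (ae_map_iff (measurable_id.prodMk (measurable_rad n)).aemeasurable
    (measurableSet_Icc.prod measurableSet_Icc)).2 <| ae_restrict_of_forall_mem measurableSet_Icc
    fun x hx => ⟨hx, ?_⟩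
  rcases rad_eq_zero_or_one n x with h | h <;> simp [h]

theorem VW_rho15_of_ne {n m : ℕ} (h : n ≠ m) :
    VW (volume.restrict (Icc (0:ℝ) 1)) (rho15 n) (rho15 m) = 2⁻¹ := by
  rw [rho15, rho15, VW_map_graph _ (measurable_rad n) (measurable_rad m)]
  rcases h.lt_or_gt with h | h
  · exact lintegral_edist_rad h
  · simpa only [edist_comm] using lintegral_edist_rad h

/-- the alternating sequence `(ρ^n)` lies in `Π(μ)` (first marginal
`μ = Leb ↾ [0,1]`, concentrated on `[0,1]²`), is at mutual `𝒲`-distance `1/2`, and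
therefore has no `𝒲`-Cauchy subsequence, so `(Π(μ), 𝒲)` is not (sequentially) compact. -/
theorem stmt15 :
    (∀ n, 1 ≤ n → IsProbabilityMeasure (rho15 n) ∧
      (rho15 n).map Prod.fst = volume.restrict (Icc (0:ℝ) 1) ∧
      rho15 n ((Icc (0:ℝ) 1 ×ˢ Icc (0:ℝ) 1)ᶜ) = 0) ∧
    (∀ n m : ℕ, 1 ≤ n → 1 ≤ m → n ≠ m →
      VW (volume.restrict (Icc (0:ℝ) 1)) (rho15 n) (rho15 m) = 1/2) ∧
    ¬∃ φ : ℕ → ℕ, StrictMono φ ∧ (∀ l, 1 ≤ φ l) ∧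
      ∀ ε : ℝ, 0 < ε → ∃ N, ∀ k ≥ N, ∀ l ≥ N,
        VW (volume.restrict (Icc (0:ℝ) 1)) (rho15 (φ k)) (rho15 (φ l)) <
          ENNReal.ofReal ε := by
  refine ⟨fun n _ => ⟨inferInstance, map_fst_rho15 n, rho15_compl_Icc_prod_Icc n⟩,
    fun n m _ _ h => (VW_rho15_of_ne h).trans (one_div 2).symm, ?_⟩
  rintro ⟨φ, hφ, -, hCauchy⟩
  obtain ⟨N, hN⟩ := hCauchy (1 / 2) one_half_pos
  have h := hN N le_rfl (N + 1) N.le_succ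
  rw [VW_rho15_of_ne (hφ N.lt_succ_self).ne, ENNReal.ofReal_div_of_pos two_pos] at h
  simp at h
end
end

section
/- Let μ₁, μ₂, ν₁, ν₂ be finite nonnegative compactly supported Borel measures on ℝ with μ₁(ℝ) = ν₁(ℝ) and μ₂(ℝ) = ν₂(ℝ). Then W_ℝ(μ₁+μ₂, ν₁+ν₂) ≤ W_ℝ(μ₁, ν₁) + W_ℝ(μ₂, ν₂). If moreover μ₁ ⪯ μ₂ and ν₁ ⪯ ν₂, i.e. x₁ ≤ x₂ for (μ₁⊗μ₂)-almost every (x₁, x₂) and y₁ ≤ y₂ for (ν₁⊗ν₂)-almost every (y₁, y₂), then equality holds: W_ℝ(μ₁+μ₂, ν₁+ν₂) = W_ℝ(μ₁, ν₁) + W_ℝ(μ₂, ν₂). -/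
/-!
Write `F_α t = α (Iic t)`. On `ℝ`, `W1 α β = ∫ |F_α t - F_β t| dt`. Every coupling costs at least
this, by the layer-cake formula `|u - v| = ∫ |1{u ≤ t} - 1{v ≤ t}| dt` and
`|γ A - γ B| ≤ γ (A ∆ B)`; the quantile coupling `s ↦ (F_α⁻¹ s, F_β⁻¹ s)` attains it.

Subadditivity holds for any cost: add the couplings. If `μ₁ ⪯ μ₂`, then at every level `t`
either `μ₁` has no mass right of `t` or `μ₂` has none left of it, and likewise for `ν₁, ν₂`.
Together with `μ₁(ℝ) = ν₁(ℝ)` this gives `F_{μ₁} - F_{ν₁}` and `F_{μ₂} - F_{ν₂}` the same sign at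
`t`, so the integral of the absolute value of their sum splits.
-/

open MeasureTheory Set Filter
open scoped ENNReal Classical

noncomputable section

open scoped symmDiff Topology

section Coupling

variable {A B : Type*} [MeasurableSpace A] [MeasurableSpace B] {c : A → B → ℝ≥0∞}

theorem OTC_le_lintegral {α : Measure A} {β : Measure B} {γ : Measure (A × B)}
    (h₁ : γ.map Prod.fst = α) (h₂ : γ.map Prod.snd = β) : OTC c α β ≤ ∫⁻ p, c p.1 p.2 ∂γ :=
  iInf₂_le_of_le γ h₁ (iInf_le _ h₂)

theorem le_OTC {α : Measure A} {β : Measure B} {x : ℝ≥0∞}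
    (h : ∀ γ : Measure (A × B), γ.map Prod.fst = α → γ.map Prod.snd = β →
      x ≤ ∫⁻ p, c p.1 p.2 ∂γ) :
    x ≤ OTC c α β :=
  le_iInf₂ fun γ h₁ => le_iInf (h γ h₁)

theorem OTC_add_le (c : A → B → ℝ≥0∞) (μ₁ μ₂ : Measure A) (ν₁ ν₂ : Measure B) :
    OTC c (μ₁ + μ₂) (ν₁ + ν₂) ≤ OTC c μ₁ ν₁ + OTC c μ₂ ν₂ := by
  simp_rw [OTC, ENNReal.iInf_add, ENNReal.add_iInf]
  refine le_iInf₂ fun γ₁ h₁₁ => le_iInf fun h₁₂ => le_iInf₂ fun γ₂ h₂₁ => le_iInf fun h₂₂ => ?_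
  rw [← lintegral_add_measure]
  refine OTC_le_lintegral ?_ ?_
  · rw [Measure.map_add _ _ measurable_fst, h₁₁, h₂₁]
  · rw [Measure.map_add _ _ measurable_snd, h₁₂, h₂₂]

end Coupling

theorem Set.Iic_symmDiff_Iic {α : Type*} [LinearOrder α] (a b : α) :
    Iic a ∆ Iic b = Ioc (a ⊓ b) (a ⊔ b) := by
  ext x
  simp only [mem_symmDiff, mem_Iic, mem_Ioc, inf_lt_iff, le_sup_iff]
  grind

theorem Set.Ici_symmDiff_Ici {α : Type*} [LinearOrder α] (a b : α) :
    Ici a ∆ Ici b = Ico (a ⊓ b) (a ⊔ b) := by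
  ext x
  simp only [mem_symmDiff, mem_Ici, mem_Ico, inf_le_iff, lt_sup_iff]
  grind

theorem Real.volume_Iic_symmDiff_Iic (a b : ℝ) : volume (Iic a ∆ Iic b) = edist a b := by
  rw [Iic_symmDiff_Iic, Real.volume_Ioc, max_sub_min_eq_abs, edist_dist, Real.dist_eq,
    abs_sub_comm]

theorem Real.volume_Ici_symmDiff_Ici (a b : ℝ) : volume (Ici a ∆ Ici b) = edist a b := by
  rw [Ici_symmDiff_Ici, Real.volume_Ico, max_sub_min_eq_abs, edist_dist, Real.dist_eq,
    abs_sub_comm]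

theorem Real.volume_restrict_Ioo_Iic {m a : ℝ} (ha : a ∈ Icc 0 m) :
    volume.restrict (Ioo 0 m) (Iic a) = ENNReal.ofReal a := by
  rw [restrict_Ioo_eq_restrict_Ioc, Measure.restrict_apply measurableSet_Iic, inter_comm,
    Ioc_inter_Iic, min_eq_right ha.2, Real.volume_Ioc, sub_zero]

theorem Real.volume_restrict_Ioo_Iic_symmDiff_Iic {m a b : ℝ} (ha : a ∈ Icc 0 m)
    (hb : b ∈ Icc 0 m) : volume.restrict (Ioo 0 m) (Iic a ∆ Iic b) = edist a b := by
  have hsub : Iic a ∆ Iic b ⊆ Ioc 0 m := by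
    rw [Iic_symmDiff_Iic]
    exact Ioc_subset_Ioc (le_inf ha.1 hb.1) (sup_le ha.2 hb.2)
  rw [restrict_Ioo_eq_restrict_Ioc,
    Measure.restrict_apply (measurableSet_Iic.symmDiff measurableSet_Iic), inter_eq_left.2 hsub,
    Real.volume_Iic_symmDiff_Iic]

theorem Real.edist_add_add_of_nonneg_mul {a₁ a₂ b₁ b₂ : ℝ} (h : 0 ≤ (a₁ - b₁) * (a₂ - b₂)) :
    edist (a₁ + a₂) (b₁ + b₂) = edist a₁ b₁ + edist a₂ b₂ := by
  simp only [edist_dist, Real.dist_eq]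
  rw [← ENNReal.ofReal_add (abs_nonneg _) (abs_nonneg _), add_sub_add_comm,
    (abs_add_eq_add_abs_iff _ _).2 (mul_nonneg_iff.1 h)]

namespace MeasureTheory

theorem edist_measureReal_le_measure_symmDiff {X : Type*} [MeasurableSpace X] {μ : Measure X}
    [IsFiniteMeasure μ] (s t : Set X) : edist (μ.real s) (μ.real t) ≤ μ (s ∆ t) := by
  rw [edist_dist, Real.dist_eq, ← ofReal_measureReal]
  refine ENNReal.ofReal_le_ofReal (abs_sub_le_iff.2 ⟨?_, ?_⟩)
  · exact (le_measureReal_sdiff).trans (measureReal_mono subset_union_left)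
  · exact (le_measureReal_sdiff).trans (measureReal_mono subset_union_right)

/-- Layer-cake formula for `|f - g|`: `|f x - g x|` is the length of the set of levels `t`
separating `f x` from `g x`. -/
theorem lintegral_edist_eq_lintegral_measure_symmDiff {X : Type*} [MeasurableSpace X]
    (μ : Measure X) [SFinite μ] {f g : X → ℝ} (hf : Measurable f) (hg : Measurable g) :
    ∫⁻ x, edist (f x) (g x) ∂μ = ∫⁻ t, μ ({x | f x ≤ t} ∆ {x | g x ≤ t}) := by
  set S : Set (X × ℝ) := {q | f q.1 ≤ q.2} ∆ {q | g q.1 ≤ q.2}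
  have hS : MeasurableSet S :=
    (measurableSet_le (hf.comp measurable_fst) measurable_snd).symmDiff
      (measurableSet_le (hg.comp measurable_fst) measurable_snd)
  calc ∫⁻ x, edist (f x) (g x) ∂μ = ∫⁻ x, volume (Prod.mk x ⁻¹' S) ∂μ := by
        simp_rw [← Real.volume_Ici_symmDiff_Ici]; rfl
    _ = (μ.prod volume) S := (Measure.prod_apply hS).symm
    _ = ∫⁻ t, μ ({x | f x ≤ t} ∆ {x | g x ≤ t}) := Measure.prod_apply_symm hS

section DistributionFunction

variable (α : Measure ℝ) [IsFiniteMeasure α]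

theorem monotone_measureReal_Iic : Monotone fun t => α.real (Iic t) :=
  fun _ _ h => measureReal_mono (Iic_subset_Iic.2 h)

theorem measureReal_Iic_mem_Icc (t : ℝ) : α.real (Iic t) ∈ Icc 0 (α.real univ) :=
  ⟨measureReal_nonneg, measureReal_mono (subset_univ _)⟩

theorem tendsto_measureReal_Iic_atTop :
    Tendsto (fun t => α.real (Iic t)) atTop (𝓝 (α.real univ)) :=
  (ENNReal.tendsto_toReal (measure_ne_top α univ)).comp (tendsto_measure_Iic_atTop α)

theorem tendsto_measureReal_Iic_atBot : Tendsto (fun t => α.real (Iic t)) atBot (𝓝 0) := by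
  have h := tendsto_measure_iInter_atBot (μ := α)
    (fun _ => measurableSet_Iic.nullMeasurableSet) monotone_Iic ⟨0, measure_ne_top _ _⟩
  have h₀ : ⋂ t : ℝ, Iic t = ∅ :=
    eq_empty_of_forall_notMem fun x hx => (mem_iInter.1 hx (x - 1)).not_gt (sub_one_lt x)
  rw [h₀, measure_empty] at h
  exact (ENNReal.tendsto_toReal ENNReal.zero_ne_top).comp h

theorem tendsto_measureReal_Iic_nhdsGT (a : ℝ) :
    Tendsto (fun t => α.real (Iic t)) (𝓝[>] a) (𝓝 (α.real (Iic a))) := by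
  have h := tendsto_measure_biInter_gt (μ := α) (s := Iic) (a := a)
    (fun _ _ => measurableSet_Iic.nullMeasurableSet) (fun _ _ _ h => Iic_subset_Iic.2 h)
    ⟨a + 1, lt_add_one a, measure_ne_top _ _⟩
  have hI : ⋂ r > a, Iic r = Iic a := by
    ext x
    simp only [mem_iInter₂, mem_Iic]
    exact ⟨le_of_forall_gt_imp_ge_of_dense, fun h r hr => h.trans hr.le⟩
  rw [hI] at h
  exact (ENNReal.tendsto_toReal (measure_ne_top _ _)).comp h

variable {α}

theorem measureReal_Iic_eq_of_measure_Ioi_eq_zero {t : ℝ} (h : α (Ioi t) = 0) :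
    α.real (Iic t) = α.real univ := by
  rw [← compl_Ioi, measureReal_compl measurableSet_Ioi, measureReal_def α (Ioi t), h,
    ENNReal.toReal_zero, sub_zero]

end DistributionFunction

/-- Meaningful only for `s ∈ Ioo 0 (α.real univ)`: elsewhere the set is empty or unbounded below
and `sInf` returns a junk value. -/
def Measure.quantile (α : Measure ℝ) (s : ℝ) : ℝ := sInf {t | s ≤ α.real (Iic t)}

namespace Measure

variable {α : Measure ℝ} [IsFiniteMeasure α]

theorem quantile_le_iff {s : ℝ} (hs : s ∈ Ioo 0 (α.real univ)) (t : ℝ) :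
    α.quantile s ≤ t ↔ s ≤ α.real (Iic t) := by
  obtain ⟨t₁, ht₁⟩ := ((tendsto_order.1 (tendsto_measureReal_Iic_atTop α)).1 s hs.2).exists
  obtain ⟨t₀, ht₀⟩ := ((tendsto_order.1 (tendsto_measureReal_Iic_atBot α)).2 s hs.1).exists
  have hne : {t | s ≤ α.real (Iic t)}.Nonempty := ⟨t₁, ht₁.le⟩
  have hbdd : BddBelow {t | s ≤ α.real (Iic t)} :=
    ⟨t₀, fun t ht => ((monotone_measureReal_Iic α).reflect_lt (ht₀.trans_le ht)).le⟩
  refine ⟨fun h => ?_, fun h => csInf_le hbdd h⟩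
  refine le_trans ?_ (monotone_measureReal_Iic α h)
  refine ge_of_tendsto (tendsto_measureReal_Iic_nhdsGT α _) (eventually_nhdsWithin_of_forall ?_)
  intro u hu
  obtain ⟨v, hv, hvu⟩ := exists_lt_of_csInf_lt hne hu
  exact hv.trans (monotone_measureReal_Iic α hvu.le)

theorem monotoneOn_quantile : MonotoneOn α.quantile (Ioo 0 (α.real univ)) := by
  intro s₁ hs₁ s₂ hs₂ h
  exact (quantile_le_iff hs₁ _).2 (h.trans ((quantile_le_iff hs₂ _).1 le_rfl))

theorem aemeasurable_quantile :
    AEMeasurable α.quantile (volume.restrict (Ioo 0 (α.real univ))) :=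
  aemeasurable_restrict_of_monotoneOn measurableSet_Ioo monotoneOn_quantile

theorem quantile_preimage_Iic_inter (t : ℝ) :
    α.quantile ⁻¹' Iic t ∩ Ioo 0 (α.real univ) = Iic (α.real (Iic t)) ∩ Ioo 0 (α.real univ) := by
  ext s
  simp only [mem_inter_iff, mem_preimage, mem_Iic, and_congr_left_iff]
  exact fun hs => quantile_le_iff hs t

theorem map_quantile : (volume.restrict (Ioo 0 (α.real univ))).map α.quantile = α := by
  refine (ext_of_Iic α _ fun t => ?_).symm
  rw [map_apply_of_aemeasurable aemeasurable_quantile measurableSet_Iic,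
    restrict_apply' measurableSet_Ioo, quantile_preimage_Iic_inter,
    ← restrict_apply' measurableSet_Ioo,
    Real.volume_restrict_Ioo_Iic (measureReal_Iic_mem_Icc α t), ofReal_measureReal]

end Measure

theorem measure_Ioi_eq_zero_or_measure_Iic_eq_zero {μ₁ μ₂ : Measure ℝ} [SFinite μ₂]
    (h : ∀ᵐ p ∂μ₁.prod μ₂, p.1 ≤ p.2) (t : ℝ) : μ₁ (Ioi t) = 0 ∨ μ₂ (Iic t) = 0 := by
  rw [← mul_eq_zero, ← Measure.prod_prod]
  exact measure_mono_null (fun p hp => not_le.2 (hp.2.trans_lt hp.1)) (ae_iff.1 h)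

end MeasureTheory

def cdfDist (α β : Measure ℝ) : ℝ≥0∞ := ∫⁻ t, edist (α.real (Iic t)) (β.real (Iic t))

theorem cdfDist_le_lintegral_edist {α β : Measure ℝ} [IsFiniteMeasure α] {γ : Measure (ℝ × ℝ)}
    (h₁ : γ.map Prod.fst = α) (h₂ : γ.map Prod.snd = β) :
    cdfDist α β ≤ ∫⁻ p, edist p.1 p.2 ∂γ := by
  have : IsFiniteMeasure (γ.map Prod.fst) := h₁ ▸ inferInstance
  have : IsFiniteMeasure γ := Measure.isFiniteMeasure_of_map measurable_fst.aemeasurable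
  rw [lintegral_edist_eq_lintegral_measure_symmDiff γ measurable_fst measurable_snd]
  refine lintegral_mono fun t => ?_
  rw [← h₁, ← h₂, map_measureReal_apply measurable_fst measurableSet_Iic,
    map_measureReal_apply measurable_snd measurableSet_Iic]
  exact edist_measureReal_le_measure_symmDiff _ _

theorem cdfDist_le_W1 {α β : Measure ℝ} [IsFiniteMeasure α] : cdfDist α β ≤ W1 α β :=
  le_OTC fun _ => cdfDist_le_lintegral_edist

open Measure in
theorem W1_le_cdfDist {α β : Measure ℝ} [IsFiniteMeasure α] [IsFiniteMeasure β]
    (h : α univ = β univ) : W1 α β ≤ cdfDist α β := by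
  have hI : β.real univ = α.real univ := by rw [measureReal_def, measureReal_def, h]
  have hQα : AEMeasurable α.quantile (volume.restrict (Ioo 0 (α.real univ))) :=
    aemeasurable_quantile
  have hQβ : AEMeasurable β.quantile (volume.restrict (Ioo 0 (α.real univ))) :=
    hI ▸ aemeasurable_quantile
  have hQ := hQα.prodMk hQβ
  refine (OTC_le_lintegral (γ := (volume.restrict (Ioo 0 (α.real univ))).map
    fun s => (α.quantile s, β.quantile s)) ?_ ?_).trans ?_
  · rw [AEMeasurable.map_map_of_aemeasurable measurable_fst.aemeasurable hQ]
    exact map_quantile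
  · rw [AEMeasurable.map_map_of_aemeasurable measurable_snd.aemeasurable hQ, ← hI]
    exact map_quantile
  rw [lintegral_edist_eq_lintegral_measure_symmDiff _ measurable_fst measurable_snd]
  refine (lintegral_congr fun t => ?_).le
  rw [map_apply_of_aemeasurable hQ ((measurableSet_le measurable_fst measurable_const).symmDiff
      (measurableSet_le measurable_snd measurable_const)), restrict_apply' measurableSet_Ioo]
  have key : (fun s => (α.quantile s, β.quantile s)) ⁻¹' ({p : ℝ × ℝ | p.1 ≤ t} ∆ {p | p.2 ≤ t})
        ∩ Ioo 0 (α.real univ)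
      = (Iic (α.real (Iic t)) ∆ Iic (β.real (Iic t))) ∩ Ioo 0 (α.real univ) := by
    rw [preimage_symmDiff, inter_symmDiff_distrib_right, inter_symmDiff_distrib_right]
    exact congrArg₂ _ (quantile_preimage_Iic_inter t) (hI ▸ quantile_preimage_Iic_inter t)
  rw [key, ← restrict_apply' measurableSet_Ioo, Real.volume_restrict_Ioo_Iic_symmDiff_Iic
    (measureReal_Iic_mem_Icc α t) (hI ▸ measureReal_Iic_mem_Icc β t)]

theorem W1_eq_cdfDist {α β : Measure ℝ} [IsFiniteMeasure α] [IsFiniteMeasure β]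
    (h : α univ = β univ) : W1 α β = cdfDist α β :=
  le_antisymm (W1_le_cdfDist h) cdfDist_le_W1

theorem cdfDist_add_of_ae_le {μ₁ μ₂ ν₁ ν₂ : Measure ℝ} [IsFiniteMeasure μ₁] [IsFiniteMeasure μ₂]
    [IsFiniteMeasure ν₁] [IsFiniteMeasure ν₂] (hm : μ₁ univ = ν₁ univ)
    (hμ : ∀ᵐ p ∂μ₁.prod μ₂, p.1 ≤ p.2) (hν : ∀ᵐ p ∂ν₁.prod ν₂, p.1 ≤ p.2) :
    cdfDist (μ₁ + μ₂) (ν₁ + ν₂) = cdfDist μ₁ ν₁ + cdfDist μ₂ ν₂ := by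
  rw [cdfDist, cdfDist, cdfDist, ← lintegral_add_left
    ((monotone_measureReal_Iic μ₁).measurable.edist (monotone_measureReal_Iic ν₁).measurable)]
  refine lintegral_congr fun t => ?_
  rw [measureReal_add_apply, measureReal_add_apply]
  refine Real.edist_add_add_of_nonneg_mul ?_
  have hm' : μ₁.real univ = ν₁.real univ := by rw [measureReal_def, measureReal_def, hm]
  have hμ₁ := measureReal_Iic_mem_Icc μ₁ t
  have hν₁ := measureReal_Iic_mem_Icc ν₁ t
  have hμ₂ := measureReal_Iic_mem_Icc μ₂ t
  have hν₂ := measureReal_Iic_mem_Icc ν₂ t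
  rcases measure_Ioi_eq_zero_or_measure_Iic_eq_zero hμ t with hμ | hμ <;>
    rcases measure_Ioi_eq_zero_or_measure_Iic_eq_zero hν t with hν | hν
  · rw [measureReal_Iic_eq_of_measure_Ioi_eq_zero hμ,
      measureReal_Iic_eq_of_measure_Ioi_eq_zero hν, hm', sub_self, zero_mul]
  · rw [measureReal_Iic_eq_of_measure_Ioi_eq_zero hμ, measureReal_def ν₂, hν, ENNReal.toReal_zero]
    exact mul_nonneg (by linarith [hν₁.2]) (by linarith [hμ₂.1])
  · rw [measureReal_Iic_eq_of_measure_Ioi_eq_zero hν, measureReal_def μ₂, hμ, ENNReal.toReal_zero]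
    exact mul_nonneg_of_nonpos_of_nonpos (by linarith [hμ₁.2]) (by linarith [hν₂.1])
  · rw [measureReal_def μ₂, measureReal_def ν₂, hμ, hν, sub_self, mul_zero]

theorem stmt16_general (μ1 μ2 ν1 ν2 : Measure ℝ)
    [IsFiniteMeasure μ1] [IsFiniteMeasure μ2] [IsFiniteMeasure ν1] [IsFiniteMeasure ν2]
    (hm1 : μ1 univ = ν1 univ) (hm2 : μ2 univ = ν2 univ) :
    W1 (μ1 + μ2) (ν1 + ν2) ≤ W1 μ1 ν1 + W1 μ2 ν2 ∧
    ((∀ᵐ p ∂(μ1.prod μ2), p.1 ≤ p.2) → (∀ᵐ p ∂(ν1.prod ν2), p.1 ≤ p.2) →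
      W1 (μ1 + μ2) (ν1 + ν2) = W1 μ1 ν1 + W1 μ2 ν2) := by
  refine ⟨OTC_add_le edist μ1 μ2 ν1 ν2, fun hμ hν => ?_⟩
  have hm : (μ1 + μ2) univ = (ν1 + ν2) univ := by
    rw [Measure.add_apply, Measure.add_apply, hm1, hm2]
  rw [W1_eq_cdfDist hm, W1_eq_cdfDist hm1, W1_eq_cdfDist hm2, cdfDist_add_of_ae_le hm1 hμ hν]

/-- one-dimensional subadditivity and ordered additivity of the
Wasserstein-1 distance: always `W(μ₁+μ₂, ν₁+ν₂) ≤ W(μ₁,ν₁) + W(μ₂,ν₂)`, with equality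
whenever `μ₁ ⪯ μ₂` and `ν₁ ⪯ ν₂` (i.e. the mass of the first measure lies entirely to the
left of the mass of the second). -/
theorem stmt16 (μ1 μ2 ν1 ν2 : Measure ℝ)
    [IsFiniteMeasure μ1] [IsFiniteMeasure μ2] [IsFiniteMeasure ν1] [IsFiniteMeasure ν2]
    (hμ1 : ∃ K, IsCompact K ∧ μ1 Kᶜ = 0) (hμ2 : ∃ K, IsCompact K ∧ μ2 Kᶜ = 0)
    (hν1 : ∃ K, IsCompact K ∧ ν1 Kᶜ = 0) (hν2 : ∃ K, IsCompact K ∧ ν2 Kᶜ = 0)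
    (hm1 : μ1 univ = ν1 univ) (hm2 : μ2 univ = ν2 univ) :
    W1 (μ1 + μ2) (ν1 + ν2) ≤ W1 μ1 ν1 + W1 μ2 ν2 ∧
    ((∀ᵐ p ∂(μ1.prod μ2), p.1 ≤ p.2) → (∀ᵐ p ∂(ν1.prod ν2), p.1 ≤ p.2) →
      W1 (μ1 + μ2) (ν1 + ν2) = W1 μ1 ν1 + W1 μ2 ν2) :=
  stmt16_general μ1 μ2 ν1 ν2 hm1 hm2

end
end

section
/- Let d ≥ 1 and let μ be a Borel probability measure on X = [0,1]^d with μ = f·Leb for an integrable density f : ℝ^d → [0,∞). For even n ≥ 2 and x ∈ [0,1)^d let Q_n(x) := (2/n)·⌊(n/2)x⌋ + [0,2/n]^d (floor taken componentwise) denote the A-composite cell containing x, and c_n(x) := (2/n)·⌊(n/2)x⌋ + (1/n,…,1/n) its center. Then for μ-almost every x ∈ [0,1)^d and every continuous φ : [−1,1]^d → ℝ: (1/μ(Q_n(x))) · ∫_{Q_n(x)} φ(n(x' − c_n(x))) dμ(x') → 2^{−d} ∫_{[−1,1]^d} φ(z) dz as n → ∞ through even integers. In other words, the normalized restriction of μ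 to the composite cell containing x, rescaled to the reference cell Z = [−1,1]^d, converges weakly* to the uniform probability measure on Z. -/
open MeasureTheory Set Filter
open scoped ENNReal

noncomputable section

/-- The reference cell `Z = [−1,1]^d`. -/
def Zcube (d : ℕ) : Set (E d) := {z | ∀ i, z i ∈ Icc (-1:ℝ) 1}

/-- The A-composite cell at scale `n = 2m` containing `x`:
`Q_n(x) = (2/n)⌊(n/2)x⌋ + [0,2/n]^d = (1/m)⌊m x⌋ + [0,1/m]^d` (floor componentwise). -/
def Qcell (d m : ℕ) (x : E d) : Set (E d) :=
  {x' | ∀ i, (⌊(m:ℝ) * x i⌋ : ℝ) / m ≤ x' i ∧ x' i ≤ (⌊(m:ℝ) * x i⌋ : ℝ) / m + 1 / m}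

/-! Lebesgue differentiation along the balls `closedBall x (√d / m)`, which contain the cell
`Q = Qcell d m x` and have volume a fixed multiple of `m⁻ᵈ`, gives `mᵈ ∫_Q |f - f x| → 0` for
almost every `x`. At such a point `mᵈ ∫_Q f · (φ ∘ S) = f x · mᵈ ∫_Q φ ∘ S + o(1)`, and the affine
change of variables `S` turns `mᵈ ∫_Q φ ∘ S` into `2⁻ᵈ ∫_Z φ`. For `φ = 1` this says
`mᵈ μ(Q) → f x`; dividing the two limits is legitimate because `f x > 0` for `μ`-a.e. `x`. -/

open Metric Topology

theorem setIntegral_withDensity_ofReal {X : Type*} [MeasurableSpace X] {μ : Measure X}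
    [SFinite μ] {f : X → ℝ} (hf : AEMeasurable f μ) (hf0 : ∀ x, 0 ≤ f x) (s : Set X)
    (g : X → ℝ) :
    ∫ x in s, g x ∂μ.withDensity (fun x => ENNReal.ofReal (f x)) = ∫ x in s, f x * g x ∂μ := by
  rw [setIntegral_withDensity_eq_setIntegral_toReal_smul₀' s hf.ennreal_ofReal.restrict
    (Eventually.of_forall fun _ => ENNReal.ofReal_lt_top)]
  simp only [ENNReal.toReal_ofReal (hf0 _), smul_eq_mul]

theorem ae_withDensity_ofReal_pos {X : Type*} [MeasurableSpace X] {μ : Measure X} {f : X → ℝ}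
    (hf : AEMeasurable f μ) : ∀ᵐ x ∂μ.withDensity (fun x => ENNReal.ofReal (f x)), 0 < f x :=
  (ae_withDensity_iff' hf.ennreal_ofReal).2 <| Eventually.of_forall fun _ h =>
    ENNReal.ofReal_pos.1 (pos_iff_ne_zero.2 h)

section HaarDifferentiation

variable {V F : Type*} [NormedAddCommGroup V] [NormedSpace ℝ V] [MeasurableSpace V] [BorelSpace V]
  [FiniteDimensional ℝ V] [NormedAddCommGroup F]

theorem ae_tendsto_setIntegral_closedBall_norm_sub_div_pow (μ : Measure V)
    [μ.IsAddHaarMeasure] {f : V → F} (hf : LocallyIntegrable f μ) :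
    ∀ᵐ x ∂μ, ∀ r : ℕ → ℝ, Tendsto r atTop (𝓝[>] 0) →
      Tendsto (fun j => (∫ y in closedBall x (r j), ‖f y - f x‖ ∂μ) / r j ^ Module.finrank ℝ V)
        atTop (𝓝 0) := by
  filter_upwards [IsUnifLocDoublingMeasure.ae_tendsto_average_norm_sub μ hf 1] with x hx r hr
  have hr_pos : ∀ᶠ j in atTop, 0 < r j := hr.eventually self_mem_nhdsWithin
  have havg := (hx (fun _ => x) r hr (hr_pos.mono fun j hj => by simp [hj.le])).const_mul
    (μ.real (closedBall 0 1))
  rw [mul_zero] at havg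
  refine havg.congr' (hr_pos.mono fun j hj => ?_)
  have hball : μ.real (closedBall (0 : V) 1) ≠ 0 := ENNReal.toReal_ne_zero.2
    ⟨(measure_closedBall_pos μ 0 one_pos).ne', measure_closedBall_lt_top.ne⟩
  rw [setAverage_eq, Measure.addHaar_real_closedBall' μ x hj.le, smul_eq_mul]
  field_simp

end HaarDifferentiation

section Cells

variable {d : ℕ}

def cellCenter (d m : ℕ) (x : E d) : E d :=
  (WithLp.equiv 2 (∀ _ : Fin d, ℝ)).symm fun i => (⌊(m:ℝ) * x i⌋ : ℝ) / m + 1 / (2*m)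

/-- The rescaling `S(x') = n (x' - c_n(x))` onto `Z`, with `n = 2m`. -/
def cellRescale (d m : ℕ) (x x' : E d) : E d :=
  (2*m:ℝ) • (x' - cellCenter d m x)

theorem Zcube_eq_preimage_pi :
    Zcube d = WithLp.ofLp ⁻¹' Set.pi univ fun _ => Icc (-1 : ℝ) 1 := by
  ext z; simp only [Zcube, mem_ofPred_eq, mem_preimage, mem_univ_pi]

theorem isCompact_Zcube : IsCompact (Zcube d) := by
  rw [Zcube_eq_preimage_pi]
  exact (PiLp.homeomorph 2 _).isCompact_preimage.2 (isCompact_univ_pi fun _ => isCompact_Icc)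

theorem volume_real_Zcube : volume.real (Zcube d) = 2 ^ d := by
  rw [measureReal_def, Zcube_eq_preimage_pi, (PiLp.volume_preserving_ofLp (Fin d)).measure_preimage
    (MeasurableSet.univ_pi fun _ => measurableSet_Icc).nullMeasurableSet, volume_pi_pi]
  norm_num [Real.volume_Icc]

theorem Qcell_eq_preimage_Zcube {m : ℕ} (hm : m ≠ 0) (x : E d) :
    Qcell d m x = cellRescale d m x ⁻¹' Zcube d := by
  have hm' : (0:ℝ) < m := by positivity
  ext x'
  refine forall_congr' fun i => ?_
  have hi : cellRescale d m x x' i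
      = 2 * (m * (x' i - (⌊(m:ℝ) * x i⌋ : ℝ) / m)) - 1 := by
    simp only [cellRescale, cellCenter, PiLp.smul_apply, PiLp.sub_apply, smul_eq_mul,
      WithLp.equiv_symm_apply]
    field_simp
    ring
  have hcell : (⌊(m:ℝ) * x i⌋ : ℝ) / m ≤ x' i ∧ x' i ≤ (⌊(m:ℝ) * x i⌋ : ℝ) / m + 1 / m ↔
      0 ≤ m * (x' i - (⌊(m:ℝ) * x i⌋ : ℝ) / m) ∧ m * (x' i - (⌊(m:ℝ) * x i⌋ : ℝ) / m) ≤ 1 := by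
    rw [mul_nonneg_iff_of_pos_left hm', sub_nonneg, ← le_div_iff₀' hm', sub_le_iff_le_add']
  rw [hi, mem_Icc, hcell]
  constructor <;> rintro ⟨h1, h2⟩ <;> constructor <;> linarith

theorem mem_Qcell_self {m : ℕ} (hm : m ≠ 0) (x : E d) : x ∈ Qcell d m x := by
  have hm' : (0:ℝ) < m := by positivity
  refine fun i => ⟨?_, ?_⟩
  · rw [div_le_iff₀' hm']
    exact Int.floor_le _
  · rw [← add_div, le_div_iff₀' hm']
    exact (Int.lt_floor_add_one _).le

theorem Qcell_subset_closedBall {m : ℕ} (hm : m ≠ 0) (x : E d) :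
    Qcell d m x ⊆ closedBall x (√d / m) := by
  intro x' hx'
  have hm' : (0:ℝ) < m := by positivity
  have hcoord : ∀ i, dist (x' i) (x i) ≤ 1 / m := by
    intro i
    simpa using Real.dist_le_of_mem_Icc (hx' i) (mem_Qcell_self hm x i)
  rw [mem_closedBall, EuclideanSpace.dist_eq]
  calc √(∑ i, dist (x' i) (x i) ^ 2) ≤ √(∑ _i : Fin d, (1 / m : ℝ) ^ 2) := by
        gcongr with i; exact hcoord i
    _ = √d / m := by simp [Real.sqrt_mul, Real.sqrt_sq hm'.le, div_eq_mul_inv]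

theorem continuous_cellRescale (m : ℕ) (x : E d) : Continuous (cellRescale d m x) := by
  unfold cellRescale; fun_prop

theorem measurableSet_Qcell {m : ℕ} (hm : m ≠ 0) (x : E d) : MeasurableSet (Qcell d m x) :=
  Qcell_eq_preimage_Zcube hm x ▸
    isCompact_Zcube.isClosed.measurableSet.preimage (continuous_cellRescale m x).measurable

theorem volume_Qcell_ne_top {m : ℕ} (hm : m ≠ 0) (x : E d) : volume (Qcell d m x) ≠ ⊤ :=
  ((measure_mono (Qcell_subset_closedBall hm x)).trans_lt measure_closedBall_lt_top).ne

theorem integrableOn_Qcell {F : Type*} [NormedAddCommGroup F] {f : E d → F}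
    (hf : LocallyIntegrable f volume) {m : ℕ} (hm : m ≠ 0) (x : E d) :
    IntegrableOn f (Qcell d m x) :=
  (hf.integrableOn_isCompact (isCompact_closedBall x _)).mono_set (Qcell_subset_closedBall hm x)

theorem setIntegral_Qcell_comp_cellRescale {m : ℕ} (hm : m ≠ 0) (x : E d) (φ : E d → ℝ) :
    ∫ x' in Qcell d m x, φ (cellRescale d m x x') = ((2*m:ℝ)^d)⁻¹ * ∫ z in Zcube d, φ z := by
  rw [← integral_indicator (measurableSet_Qcell hm x), Qcell_eq_preimage_Zcube hm,
    ← integral_indicator isCompact_Zcube.isClosed.measurableSet]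
  have hcomp : ∀ x', (cellRescale d m x ⁻¹' Zcube d).indicator
      (fun x' => φ (cellRescale d m x x')) x' = (Zcube d).indicator φ (cellRescale d m x x') :=
    fun _ => indicator_comp_right _
  simp only [hcomp]
  simp only [cellRescale, smul_sub]
  rw [Measure.integral_comp_smul volume
      (fun y => (Zcube d).indicator φ (y - (2*m:ℝ) • cellCenter d m x)) (2*m),
    integral_sub_right_eq_self, finrank_euclideanSpace_fin, smul_eq_mul,
    abs_of_nonneg (by positivity)]

theorem ae_tendsto_pow_mul_setIntegral_Qcell_norm_sub {F : Type*} [NormedAddCommGroup F]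
    (hd : 1 ≤ d) {f : E d → F}
    (hf : LocallyIntegrable f volume) :
    ∀ᵐ x, Tendsto (fun m : ℕ => (m:ℝ)^d * ∫ y in Qcell d m x, ‖f y - f x‖) atTop (𝓝 0) := by
  filter_upwards [ae_tendsto_setIntegral_closedBall_norm_sub_div_pow volume hf] with x hx
  have hsqrt : 0 < √(d:ℝ) := Real.sqrt_pos.2 (by exact_mod_cast hd)
  have hr : Tendsto (fun m : ℕ => √(d:ℝ) / m) atTop (𝓝[>] 0) :=
    tendsto_nhdsWithin_iff.2 ⟨tendsto_const_div_atTop_nhds_zero_nat _,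
      eventually_gt_atTop 0 |>.mono fun m hm => div_pos hsqrt (Nat.cast_pos.2 hm)⟩
  have hball := (hx _ hr).const_mul (√(d:ℝ) ^ d)
  rw [mul_zero, finrank_euclideanSpace_fin] at hball
  refine squeeze_zero' (Eventually.of_forall fun m =>
    mul_nonneg (by positivity) (integral_nonneg fun _ => norm_nonneg _)) ?_ hball
  filter_upwards [eventually_ne_atTop 0] with m hm
  have hm' : (0:ℝ) < m := by positivity
  have hsub : ∫ y in Qcell d m x, ‖f y - f x‖ ≤ ∫ y in closedBall x (√d / m), ‖f y - f x‖ :=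
    setIntegral_mono_set
      ((hf.integrableOn_isCompact (isCompact_closedBall x _)).sub
        (integrableOn_const measure_closedBall_lt_top.ne)).norm
      (Eventually.of_forall fun _ => norm_nonneg _)
      (Qcell_subset_closedBall hm x).eventuallyLE
  calc (m:ℝ)^d * ∫ y in Qcell d m x, ‖f y - f x‖
      ≤ (m:ℝ)^d * ∫ y in closedBall x (√d / m), ‖f y - f x‖ := by gcongr
    _ = √(d:ℝ) ^ d * ((∫ y in closedBall x (√d / m), ‖f y - f x‖) / (√d / m) ^ d) := by
        rw [div_pow]
        field_simp

variable {φ : E d → ℝ} {m : ℕ} {x : E d}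

theorem ae_restrict_Qcell_norm_comp_cellRescale_le {C : ℝ} (hC : ∀ z ∈ Zcube d, ‖φ z‖ ≤ C)
    (hm : m ≠ 0) : ∀ᵐ y ∂volume.restrict (Qcell d m x), ‖φ (cellRescale d m x y)‖ ≤ C := by
  refine (ae_restrict_iff' (measurableSet_Qcell hm x)).2 (Eventually.of_forall fun y hy => hC _ ?_)
  rwa [Qcell_eq_preimage_Zcube hm] at hy

theorem IntegrableOn.mul_comp_cellRescale {g : E d → ℝ} (hg : IntegrableOn g (Qcell d m x))
    (hφ : Continuous φ) (hm : m ≠ 0) :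
    IntegrableOn (fun y => g y * φ (cellRescale d m x y)) (Qcell d m x) := by
  obtain ⟨C, hC⟩ := isCompact_Zcube.exists_bound_of_continuousOn hφ.continuousOn
  exact hg.mul_bdd (hφ.comp (continuous_cellRescale m x)).aestronglyMeasurable
    (ae_restrict_Qcell_norm_comp_cellRescale_le hC hm)

theorem setIntegral_Qcell_mul_comp_cellRescale {f : E d → ℝ} (hf : LocallyIntegrable f volume)
    (hφ : Continuous φ) (hm : m ≠ 0) :
    ∫ y in Qcell d m x, f y * φ (cellRescale d m x y)
      = (∫ y in Qcell d m x, (f y - f x) * φ (cellRescale d m x y))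
        + f x * (((2*m:ℝ)^d)⁻¹ * ∫ z in Zcube d, φ z) := by
  have hsplit : ∀ y, f y * φ (cellRescale d m x y)
      = (f y - f x) * φ (cellRescale d m x y) + f x * φ (cellRescale d m x y) :=
    fun y => by ring
  simp only [hsplit]
  have hQ := volume_Qcell_ne_top hm x
  rw [integral_add
      (IntegrableOn.mul_comp_cellRescale (g := fun y => f y - f x)
        ((integrableOn_Qcell hf hm x).sub (integrableOn_const hQ)) hφ hm)
      (IntegrableOn.mul_comp_cellRescale (g := fun _ => f x) (integrableOn_const hQ) hφ hm),
    integral_const_mul, setIntegral_Qcell_comp_cellRescale hm]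

theorem norm_setIntegral_Qcell_sub_mul_comp_cellRescale_le {f : E d → ℝ}
    (hf : LocallyIntegrable f volume) {C : ℝ} (hC : ∀ z ∈ Zcube d, ‖φ z‖ ≤ C) (hm : m ≠ 0) :
    ‖∫ y in Qcell d m x, (f y - f x) * φ (cellRescale d m x y)‖
      ≤ C * ∫ y in Qcell d m x, ‖f y - f x‖ := by
  calc ‖∫ y in Qcell d m x, (f y - f x) * φ (cellRescale d m x y)‖
      ≤ ∫ y in Qcell d m x, C * ‖f y - f x‖ := by
        refine norm_integral_le_of_norm_le (Integrable.const_mul ?_ C)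
          ((ae_restrict_Qcell_norm_comp_cellRescale_le hC hm).mono fun y hy => ?_)
        · exact ((integrableOn_Qcell hf hm x).sub
            (integrableOn_const (volume_Qcell_ne_top hm x))).norm
        · rw [norm_mul, mul_comm]
          gcongr
    _ = C * ∫ y in Qcell d m x, ‖f y - f x‖ := integral_const_mul C _

theorem tendsto_pow_mul_setIntegral_Qcell_mul_comp_cellRescale {f : E d → ℝ}
    (hf : LocallyIntegrable f volume)
    (hx : Tendsto (fun m : ℕ => (m:ℝ)^d * ∫ y in Qcell d m x, ‖f y - f x‖) atTop (𝓝 0))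
    (hφ : Continuous φ) :
    Tendsto (fun m : ℕ => (m:ℝ)^d * ∫ y in Qcell d m x, f y * φ (cellRescale d m x y)) atTop
      (𝓝 (f x * ((2^d)⁻¹ * ∫ z in Zcube d, φ z))) := by
  obtain ⟨C, hC⟩ := isCompact_Zcube.exists_bound_of_continuousOn hφ.continuousOn
  have herr : Tendsto (fun m : ℕ =>
      (m:ℝ)^d * ∫ y in Qcell d m x, (f y - f x) * φ (cellRescale d m x y)) atTop (𝓝 0) := by
    refine squeeze_zero_norm' ?_ (by simpa using hx.const_mul C)
    filter_upwards [eventually_ne_atTop 0] with m hm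
    rw [norm_mul, norm_pow, Real.norm_natCast, mul_left_comm]
    gcongr
    exact norm_setIntegral_Qcell_sub_mul_comp_cellRescale_le hf hC hm
  have hlim := herr.add_const (f x * ((2^d)⁻¹ * ∫ z in Zcube d, φ z))
  rw [zero_add] at hlim
  refine hlim.congr' ?_
  filter_upwards [eventually_ne_atTop 0] with m hm
  rw [setIntegral_Qcell_mul_comp_cellRescale hf hφ hm, mul_pow]
  field_simp

end Cells

theorem stmt18_general (d : ℕ) (hd : 1 ≤ d) (f : E d → ℝ) (hfi : Integrable f volume)
    (hf0 : ∀ x, 0 ≤ f x)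
    (μ : Measure (E d)) (hμ : μ = volume.withDensity fun x => ENNReal.ofReal (f x)) :
    ∀ᵐ x ∂μ, (∀ i, x i ∈ Ico (0:ℝ) 1) →
      ∀ φ : E d → ℝ, Continuous φ →
        Tendsto (fun m : ℕ =>
            (1 / (μ (Qcell d m x)).toReal) *
              ∫ x' in Qcell d m x,
                φ ((WithLp.equiv 2 (∀ _ : Fin d, ℝ)).symm
                  fun i => (2*m : ℝ) * (x' i - ((⌊(m:ℝ) * x i⌋ : ℝ) / m + 1 / (2*m)))) ∂μ)
          atTop
          (nhds ((1 / 2^d) * ∫ z in Zcube d, φ z)) := by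
  subst hμ
  have hf := hfi.locallyIntegrable
  filter_upwards [ae_withDensity_ofReal_pos hfi.aemeasurable,
    withDensity_absolutelyContinuous _ _ |>.ae_le
      (ae_tendsto_pow_mul_setIntegral_Qcell_norm_sub hd hf)] with x hfx hx _ φ hφ
  have hnum := tendsto_pow_mul_setIntegral_Qcell_mul_comp_cellRescale hf hx hφ
  have hden := tendsto_pow_mul_setIntegral_Qcell_mul_comp_cellRescale hf hx
    (continuous_const (y := (1 : ℝ)))
  simp only [mul_one, setIntegral_const, smul_eq_mul, volume_real_Zcube] at hden
  rw [inv_mul_cancel₀ (by positivity), mul_one] at hden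
  convert (hnum.div hden hfx.ne').congr' ?_ using 2
  · field_simp
  filter_upwards [eventually_ne_atTop 0] with m hm
  have hmass : (volume.withDensity fun x => ENNReal.ofReal (f x)).real (Qcell d m x)
      = ∫ y in Qcell d m x, f y := by
    simpa using setIntegral_withDensity_ofReal hfi.aemeasurable hf0 (Qcell d m x) (fun _ => 1)
  rw [setIntegral_withDensity_ofReal hfi.aemeasurable hf0, ← measureReal_def, hmass, Pi.div_apply,
    mul_div_mul_left _ _ (pow_ne_zero d (Nat.cast_ne_zero.2 hm)), one_div_mul_eq_div]
  -- the integrand of the statement is `cellRescale` written out coordinatewise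
  rfl

/-- regularity of the undiscretized marginal scheme.  For `μ = f·Leb` a
probability measure on `X = [0,1]^d`, for `μ`-a.e. `x ∈ [0,1)^d` and every continuous `φ`,
the normalized restriction of `μ` to the composite cell containing `x`, rescaled (by
`x' ↦ n(x'−c_n(x))`, `n = 2m`) to the reference cell `Z = [−1,1]^d`, converges weakly* to
the uniform probability measure `2^{−d}·Leb ↾ Z`. -/
theorem stmt18 (d : ℕ) (hd : 1 ≤ d) (f : E d → ℝ) (hfi : Integrable f volume)
    (hf0 : ∀ x, 0 ≤ f x)
    (μ : Measure (E d)) (hμ : μ = volume.withDensity fun x => ENNReal.ofReal (f x))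
    (hμP : IsProbabilityMeasure μ) (hμX : μ (Xcube d)ᶜ = 0) :
    ∀ᵐ x ∂μ, (∀ i, x i ∈ Ico (0:ℝ) 1) →
      ∀ φ : E d → ℝ, Continuous φ →
        Tendsto (fun m : ℕ =>
            (1 / (μ (Qcell d m x)).toReal) *
              ∫ x' in Qcell d m x,
                φ ((WithLp.equiv 2 (∀ _ : Fin d, ℝ)).symm
                  fun i => (2*m : ℝ) * (x' i - ((⌊(m:ℝ) * x i⌋ : ℝ) / m + 1 / (2*m)))) ∂μ)
          atTop
          (nhds ((1 / 2^d) * ∫ z in Zcube d, φ z)) :=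
  stmt18_general d hd f hfi hf0 μ hμ
end
end
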